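/- arXiv:1912.03022 — 11 statements merged into one kernel-verified Lean document; each statement's English description precedes it below -/
import Mathlib

section
/- Let A be an infinite chain and let m, n ∈ ℕ with 2 ≤ m ≤ n. If the big Ramsey degree T(n, A) is finite, say T(n, A) = t ∈ ℕ, then T(m, A) is also finite and moreover T(m, A) ≤ t · C(n, m), where C(n, m) is the binomial coefficient. -/
/-- `t` is admissible for `(n, α)`: for every coloring of the order embeddings of the
`n`-element chain into `α` with `k ≥ 2` colors, there is a suborder of `α` order-isomorphic
to `α` (given as the range of a self-embedding `e`) on whose copies of `n` the coloring takes
at most `t` values. -/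
def BrdAdmissible (α : Type*) [LinearOrder α] (n t : ℕ) : Prop :=
  ∀ k : ℕ, 2 ≤ k → ∀ χ : (Fin n ↪o α) → Fin k,
    ∃ e : α ↪o α,
      ({c : Fin k | ∃ f : Fin n ↪o α, χ (f.trans e) = c}).ncard ≤ t

/-- The big Ramsey degree `T(n, α) ∈ ℕ ∪ {∞}`: the least admissible `t`, or `∞` if none. -/
noncomputable def brd (α : Type*) [LinearOrder α] (n : ℕ) : ℕ∞ :=
  sInf {t : ℕ∞ | ∃ t₀ : ℕ, t = (t₀ : ℕ∞) ∧ BrdAdmissible α n t₀}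

section
variable {α : Type*} [LinearOrder α] [Infinite α]

lemma brd_ext {m n : ℕ} (hmn : m ≤ n) (g : Fin m ↪o α) :
    ∃ (f : Fin n ↪o α) (d : Finset (Fin n)) (hd : d.card = m),
      (d.orderEmbOfFin hd).trans f = g := by
  classical
  set s₀ : Finset α := Finset.image g Finset.univ with hs₀
  have hcard₀ : s₀.card = m := by
    rw [hs₀, Finset.card_image_of_injective _ g.injective, Finset.card_univ, Fintype.card_fin]
  obtain ⟨s, hsub, hs⟩ := Infinite.exists_superset_card_eq s₀ n (hcard₀ ▸ hmn)
  refine ⟨s.orderEmbOfFin hs, ?_⟩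
  have hmem : ∀ i, g i ∈ s := fun i => hsub (by simp [hs₀])
  set φ : Fin m → Fin n := fun i => (s.orderIsoOfFin hs).symm ⟨g i, hmem i⟩ with hφ
  have hφmono : StrictMono φ := by
    intro a b hab
    have : g a < g b := g.strictMono hab
    simpa [hφ, Subtype.mk_lt_mk] using
      ((s.orderIsoOfFin hs).symm.strictMono (a := ⟨g a, hmem a⟩) (b := ⟨g b, hmem b⟩) this)
  set j : Fin m ↪o Fin n := OrderEmbedding.ofStrictMono φ hφmono with hj
  set d : Finset (Fin n) := Finset.image φ Finset.univ with hdd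
  have hd : d.card = m := by
    rw [hdd, Finset.card_image_of_injective _ hφmono.injective, Finset.card_univ,
      Fintype.card_fin]
  have hjd : d.orderEmbOfFin hd = j := by
    symm
    apply Finset.orderEmbOfFin_unique' hd
    intro i
    simp [hdd, hj]
  refine ⟨d, hd, ?_⟩
  rw [hjd]
  ext i
  simp only [RelEmbedding.trans_apply, hj, OrderEmbedding.coe_ofStrictMono]
  rw [← Finset.coe_orderIsoOfFin_apply]
  simp [hφ]

lemma brd_adm_step {m n t : ℕ} (hmn : m ≤ n) (hadm : BrdAdmissible α n t) :
    BrdAdmissible α m (t * n.choose m) := by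
  classical
  intro k hk χ
  set D := {s : Finset (Fin n) // s.card = m} with hD
  have hcardD : Fintype.card D = n.choose m := by
    have := Fintype.card_finset_len (α := Fin n) m
    rw [Fintype.card_fin] at this
    exact this
  set K := Fintype.card (D → Fin k) with hK
  set ε : (D → Fin k) ≃ Fin K := Fintype.equivFin _ with hε
  have hK2 : 2 ≤ K := by
    rw [hK, Fintype.card_fun, Fintype.card_fin, hcardD]
    calc 2 ≤ k := hk
    _ ≤ k ^ n.choose m := Nat.le_self_pow (Nat.choose_pos hmn).ne' k
  set χ' : (Fin n ↪o α) → Fin K := fun f => ε (fun d => χ ((d.1.orderEmbOfFin d.2).trans f))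
    with hχ'
  obtain ⟨e, he⟩ := hadm K hK2 χ'
  refine ⟨e, ?_⟩
  set S' := {c : Fin K | ∃ f : Fin n ↪o α, χ' (f.trans e) = c} with hS'
  have hsub : {c : Fin k | ∃ g : Fin m ↪o α, χ (g.trans e) = c} ⊆
      (fun p : Fin K × D => ε.symm p.1 p.2) '' (S' ×ˢ Set.univ) := by
    rintro c ⟨g, rfl⟩
    obtain ⟨f, d, hd, hfd⟩ := brd_ext hmn g
    refine ⟨⟨χ' (f.trans e), ⟨d, hd⟩⟩, ⟨⟨f, rfl⟩, Set.mem_univ _⟩, ?_⟩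
    simp only [hχ', Equiv.symm_apply_apply]
    congr 1
    rw [← hfd]
    rfl
  calc ({c : Fin k | ∃ g : Fin m ↪o α, χ (g.trans e) = c}).ncard
      ≤ ((fun p : Fin K × D => ε.symm p.1 p.2) '' (S' ×ˢ Set.univ)).ncard :=
        Set.ncard_le_ncard hsub (Set.toFinite _)
    _ ≤ (S' ×ˢ (Set.univ : Set D)).ncard := Set.ncard_image_le (Set.toFinite _)
    _ = Nat.card (S' ×ˢ (Set.univ : Set D) : Set (Fin K × D)) := by
        rw [Nat.card_coe_set_eq]
    _ = Nat.card S' * Nat.card (Set.univ : Set D) := by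
        rw [Nat.card_congr (Equiv.Set.prod _ _), Nat.card_prod]
    _ = S'.ncard * (Set.univ : Set D).ncard := by rw [Nat.card_coe_set_eq,
        Nat.card_coe_set_eq]
    _ ≤ t * n.choose m := by
        rw [Set.ncard_univ, Nat.card_eq_fintype_card, hcardD]
        exact Nat.mul_le_mul_right _ he

end


theorem statement0 {α : Type*} [LinearOrder α] [Infinite α] {m n t : ℕ}
    (hm : 2 ≤ m) (hmn : m ≤ n) (ht : brd α n = (t : ℕ∞)) :
    brd α m ≤ ((t * n.choose m : ℕ) : ℕ∞) := by
  classical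
  set S : Set ℕ∞ := {t' : ℕ∞ | ∃ t₀ : ℕ, t' = (t₀ : ℕ∞) ∧ BrdAdmissible α n t₀} with hS
  have hne : S.Nonempty := by
    by_contra h
    rw [Set.not_nonempty_iff_eq_empty] at h
    rw [brd, ← hS, h, sInf_empty] at ht
    exact (ENat.coe_ne_top t) ht.symm
  -- sInf of a nonempty set in ℕ∞ is attained
  obtain ⟨a, haS, hamin⟩ := wellFounded_lt.has_min S hne
  have hleast : IsLeast S a := ⟨haS, fun b hb => not_lt.1 (hamin b hb)⟩
  have hsinf : sInf S = a := (hleast.isGLB).csInf_eq hne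
  rw [brd, ← hS, hsinf] at ht
  obtain ⟨t₀, rfl, hadm⟩ := haS
  have ht₀ : t₀ = t := by exact_mod_cast ht
  subst ht₀
  have h2 : BrdAdmissible α m (t₀ * n.choose m) := brd_adm_step hmn hadm
  exact sInf_le ⟨t₀ * n.choose m, rfl, h2⟩
end

section
/- Let A be a chain with no maximal element and let m, n ∈ ℕ. If m ≤ n then T(m, A) ≤ T(n, A) in ℕ ∪ {∞}. -/
/-- Any order embedding of `Fin m` into a `NoMaxOrder` chain extends to one of `Fin n`,
agreeing on the first `m` points. -/
lemma exists_extension {α : Type*} [LinearOrder α] [NoMaxOrder α] {m n : ℕ}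
    (hm : 1 ≤ m) (hmn : m ≤ n) (f : Fin m ↪o α) :
    ∃ g : Fin n ↪o α, (Fin.castLEOrderEmb hmn).trans g = f := by
  set seq : ℕ → α := fun k => Nat.rec (f ⟨m - 1, Nat.sub_lt hm one_pos⟩)
    (fun _ x => Classical.choose (exists_gt x)) k with hseq
  have hseqmono : StrictMono seq := strictMono_nat_of_lt_succ fun k => by
    exact Classical.choose_spec (exists_gt (seq k))
  set G : Fin n → α := fun i => if h : (i : ℕ) < m then f ⟨i, h⟩ else seq ((i : ℕ) - (m - 1))
    with hG
  have hmono : StrictMono G := by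
    intro i j hij
    have hij' : (i : ℕ) < (j : ℕ) := hij
    simp only [hG]
    rcases lt_or_ge (j : ℕ) m with hj | hj
    · rw [dif_pos (lt_trans hij' hj), dif_pos hj]
      exact f.strictMono hij'
    · rw [dif_neg (not_lt.mpr hj)]
      rcases lt_or_ge (i : ℕ) m with hi | hi
      · rw [dif_pos hi]
        calc f ⟨i, hi⟩ ≤ f ⟨m - 1, Nat.sub_lt hm one_pos⟩ := by
              apply f.monotone; exact Nat.le_sub_one_of_lt hi
          _ = seq 0 := rfl
          _ < seq ((j : ℕ) - (m - 1)) := hseqmono (show 0 < (j:ℕ) - (m-1) by omega)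
      · rw [dif_neg (not_lt.mpr hi)]
        exact hseqmono (show (i:ℕ)-(m-1) < (j:ℕ)-(m-1) by omega)
  refine ⟨OrderEmbedding.ofStrictMono G hmono, ?_⟩
  ext i
  show G (Fin.castLE hmn i) = f i
  simp only [hG]
  rw [dif_pos (by simp)]
  congr

lemma admissible_mono {α : Type*} [LinearOrder α] [NoMaxOrder α] {m n t : ℕ}
    (hm : 1 ≤ m) (hmn : m ≤ n) (hn : BrdAdmissible α n t) : BrdAdmissible α m t := by
  intro k hk χ
  obtain ⟨e, he⟩ := hn k hk (fun g => χ ((Fin.castLEOrderEmb hmn).trans g))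
  refine ⟨e, le_trans (Set.ncard_le_ncard ?_ (Set.toFinite _)) he⟩
  rintro c ⟨f, hf⟩
  obtain ⟨g, hg⟩ := exists_extension hm hmn f
  exact ⟨g, by rw [show (Fin.castLEOrderEmb hmn).trans (g.trans e)
    = ((Fin.castLEOrderEmb hmn).trans g).trans e from rfl, hg, hf]⟩

theorem statement1 {α : Type*} [LinearOrder α] [NoMaxOrder α] {m n : ℕ}
    (hm : 1 ≤ m) (hmn : m ≤ n) :
    brd α m ≤ brd α n := by
  apply sInf_le_sInf
  rintro t ⟨t₀, rfl, ht⟩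
  exact ⟨t₀, rfl, admissible_mono hm hmn ht⟩
end

section
/- Let A be a chain order-isomorphic to B + ω* for some chain B, where ω* denotes the natural numbers with the reversed order. Then for all m, n ∈ ℕ, m ≤ n implies T(m, A) ≤ T(n, A) in ℕ ∪ {∞}. -/
section Aux
variable {α β : Type*} [LinearOrder α] [LinearOrder β]

/-- shift the `ℕᵒᵈ` part down by `d`. -/
def shiftEmb (β : Type*) [LinearOrder β] (d : ℕ) : (β ⊕ₗ ℕᵒᵈ) ↪o (β ⊕ₗ ℕᵒᵈ) :=
  OrderEmbedding.ofStrictMono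
    (fun x => toLex (Sum.map id (fun k => OrderDual.toDual (OrderDual.ofDual k + d)) (ofLex x)))
    (by
      intro x y h
      rw [Sum.Lex.lt_def] at h
      cases h with
      | inl h => exact Sum.Lex.inl_lt_inl_iff.2 h
      | inr h =>
        exact Sum.Lex.inr_lt_inr_iff.2 (by
          simp only [OrderDual.toDual_lt_toDual]
          exact Nat.add_lt_add_right h d)
      | sep a b => exact Sum.Lex.inl_lt_inr _ _)

lemma shiftEmb_lt (d : ℕ) (x : β ⊕ₗ ℕᵒᵈ) {j : ℕ}
    (hj : j < Sum.elim (fun _ => d) (fun k => OrderDual.ofDual k + d) (ofLex x)) :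
    shiftEmb β d x < toLex (Sum.inr (OrderDual.toDual j)) := by
  rcases hx : ofLex x with b | k
  · show toLex (Sum.map _ _ (ofLex x)) < _
    rw [hx]
    exact Sum.Lex.inl_lt_inr _ _
  · show toLex (Sum.map _ _ (ofLex x)) < _
    rw [hx]
    refine Sum.Lex.inr_lt_inr_iff.2 ?_
    simp only [OrderDual.toDual_lt_toDual]
    rw [hx] at hj
    simpa using hj

lemma extend (e : α ≃o (β ⊕ₗ ℕᵒᵈ)) {m n : ℕ} (hm : 1 ≤ m) (hmn : m ≤ n)
    (f : Fin m ↪o α) :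
    ∃ g : Fin n ↪o α, ∀ i : Fin m,
      g (Fin.castLE hmn i) = e.symm (shiftEmb β (n - m) (e (f i))) := by
  set d := n - m with hd
  have hm' : m - 1 < m := by omega
  set top : β ⊕ₗ ℕᵒᵈ := e (f ⟨m - 1, hm'⟩) with htop
  set K : ℕ := Sum.elim (fun _ => d) (fun k => OrderDual.ofDual k + d) (ofLex top) with hK
  have hKd : d ≤ K := by
    rw [hK]; rcases ofLex top with b | k <;> simp
  set G : Fin n → α := fun i =>
    if h : (i : ℕ) < m then e.symm (shiftEmb β d (e (f ⟨i, h⟩)))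
    else e.symm (toLex (Sum.inr (OrderDual.toDual (K - 1 - ((i : ℕ) - m))))) with hG
  have key : ∀ (i : Fin m) (j : ℕ), j < K →
      e.symm (shiftEmb β d (e (f i))) < e.symm (toLex (Sum.inr (OrderDual.toDual j))) := by
    intro i j hj
    rw [e.symm.lt_iff_lt]
    calc shiftEmb β d (e (f i)) ≤ shiftEmb β d top := by
          apply (shiftEmb β d).monotone
          rw [htop, e.le_iff_le]
          exact f.monotone (Fin.le_def.mpr (by have := i.isLt; simp; omega))
      _ < _ := shiftEmb_lt d top hj
  have hGmono : StrictMono G := by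
    intro i j hij
    simp only [hG]
    rcases lt_or_ge (i : ℕ) m with hi | hi <;> rcases lt_or_ge (j : ℕ) m with hj | hj
    · rw [dif_pos hi, dif_pos hj]
      rw [e.symm.lt_iff_lt, (shiftEmb β d).lt_iff_lt, e.lt_iff_lt]
      exact f.strictMono (by exact hij)
    · rw [dif_pos hi, dif_neg (not_lt.2 hj)]
      have hjn : (j : ℕ) < n := j.isLt
      exact key ⟨i, hi⟩ _ (by omega)
    · omega
    · rw [dif_neg (not_lt.2 hi), dif_neg (not_lt.2 hj)]
      rw [e.symm.lt_iff_lt]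
      refine Sum.Lex.inr_lt_inr_iff.2 ?_
      simp only [OrderDual.toDual_lt_toDual]
      have hjn : (j : ℕ) < n := j.isLt
      have : (i : ℕ) < (j : ℕ) := hij
      omega
  refine ⟨OrderEmbedding.ofStrictMono G hGmono, fun i => ?_⟩
  have hi : ((Fin.castLE hmn i : Fin n) : ℕ) < m := i.isLt
  show G (Fin.castLE hmn i) = _
  simp only [hG]
  rw [dif_pos hi]
  congr

lemma adm_mono (e : α ≃o (β ⊕ₗ ℕᵒᵈ)) {m n t : ℕ} (hm : 1 ≤ m) (hmn : m ≤ n)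
    (h : BrdAdmissible α n t) : BrdAdmissible α m t := by
  intro k hk χ
  set d := n - m
  set e' : α ↪o α :=
    (e.toOrderEmbedding.trans (shiftEmb β d)).trans e.symm.toOrderEmbedding with he'
  set ι : Fin m ↪o Fin n := Fin.castLEOrderEmb hmn with hι
  set χ' : (Fin n ↪o α) → Fin k := fun g => χ (ι.trans g) with hχ'
  obtain ⟨e₁, he₁⟩ := h k hk χ'
  refine ⟨e'.trans e₁, le_trans (Set.ncard_le_ncard ?_ (Set.toFinite _)) he₁⟩
  rintro c ⟨f, rfl⟩
  obtain ⟨g, hg⟩ := extend e hm hmn f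
  refine ⟨g, ?_⟩
  show χ (ι.trans (g.trans e₁)) = χ (f.trans (e'.trans e₁))
  congr 1
  ext i
  show e₁ (g (Fin.castLE hmn i)) = e₁ (e' (f i))
  rw [hg i]
  rfl

end Aux

/-- If `A ≅ B + ω*` (lexicographic sum, `ω*` the reversed naturals), then the big Ramsey
degrees of `A` are monotone. -/
theorem statement2 {α β : Type*} [LinearOrder α] [LinearOrder β]
    (e : α ≃o (β ⊕ₗ ℕᵒᵈ)) {m n : ℕ} (hm : 1 ≤ m) (hmn : m ≤ n) :
    brd α m ≤ brd α n := by
  apply sInf_le_sInf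
  rintro t ⟨t₀, rfl, ht⟩
  exact ⟨t₀, rfl, adm_mono e hm hmn ht⟩
end

section
/- Let r ∈ ℕ, let B be a chain with no maximal element, and let A = B + r be the chain B followed by the r-element chain r = {0 < 1 < ⋯ < r−1} (disjoint from B). Assume there exists an order embedding ĝ : A → A such that ĝ(0) ∈ B, where 0 is the least element of the appended r-element chain. Then for all m, n ∈ ℕ, m ≤ n implies T(m, A) ≤ T(n, A) in ℕ ∪ {∞}. -/
section Aux
variable {α : Type*} [LinearOrder α]

/-- In a `NoMaxOrder`, there is a strictly monotone sequence above any point. -/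
lemma exists_strictMono_above {β : Type*} [Preorder β] [NoMaxOrder β] (b : β) :
    ∃ s : ℕ → β, StrictMono s ∧ ∀ i, b < s i := by
  let s : ℕ → β := fun i => Nat.rec (exists_gt b).choose (fun _ prev => (exists_gt prev).choose) i
  have hstep : ∀ i, s i < s (i + 1) := fun i => (exists_gt (s i)).choose_spec
  have hmono : StrictMono s := strictMono_nat_of_lt_succ hstep
  refine ⟨s, hmono, fun i => ?_⟩
  induction i with
  | zero => exact (exists_gt b).choose_spec
  | succ j ih => exact ih.trans (hstep j)

/-- Extension lemma: an embedding of `Fin m` whose top value has a strictly monotone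
sequence above it extends to an embedding of `Fin n`. -/
lemma exists_extension_s3 {m n : ℕ} (hm : 1 ≤ m) (hmn : m ≤ n) (f : Fin m ↪o α)
    (s : ℕ → α) (hs : StrictMono s) (htop : ∀ i, f ⟨m - 1, Nat.sub_lt hm one_pos⟩ < s i) :
    ∃ F : Fin n ↪o α, ∀ i : Fin m, F (Fin.castLE hmn i) = f i := by
  have hFle : ∀ i : Fin m, f i ≤ f ⟨m - 1, Nat.sub_lt hm one_pos⟩ := by
    intro i
    exact f.monotone (by simp [Fin.le_def]; omega)
  set F0 : Fin n → α := fun i => if h : (i : ℕ) < m then f ⟨i, h⟩ else s ((i : ℕ) - m) with hF0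
  have hF0mono : StrictMono F0 := by
    intro i j hij
    rcases lt_or_ge (i : ℕ) m with hi | hi
    · rcases lt_or_ge (j : ℕ) m with hj | hj
      · simpa [hF0, hi, hj] using f.strictMono (show (⟨i, hi⟩ : Fin m) < ⟨j, hj⟩ from hij)
      · simp only [hF0, dif_pos hi, dif_neg (not_lt.2 hj)]
        exact lt_of_le_of_lt (hFle ⟨i, hi⟩) (htop _)
    · have hj : ¬ (j : ℕ) < m := by omega
      simp only [hF0, dif_neg (not_lt.2 hi), dif_neg hj]
      exact hs (by omega)
  refine ⟨OrderEmbedding.ofStrictMono F0 hF0mono, fun i => ?_⟩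
  simp [hF0, i.isLt]

end Aux

section Main
variable {β : Type*} [LinearOrder β] [NoMaxOrder β] {r : ℕ}

/-- Given a self-embedding `g` of `β ⊕ₗ Fin r` sending `inr 0` into the `β` part, there is a
self-embedding whose range is contained in the `β` part. -/
lemma exists_into_left (hr : 0 < r) (g : (β ⊕ₗ Fin r) ↪o (β ⊕ₗ Fin r))
    (hg : ∃ b : β, g (toLex (Sum.inr (⟨0, hr⟩ : Fin r))) = toLex (Sum.inl b)) :
    ∃ h : (β ⊕ₗ Fin r) ↪o (β ⊕ₗ Fin r), ∀ x, ∃ a : β, h x = toLex (Sum.inl a) := by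
  obtain ⟨b, hb⟩ := hg
  obtain ⟨s, hs, hbs⟩ := exists_strictMono_above b
  set h0 : (β ⊕ₗ Fin r) → (β ⊕ₗ Fin r) := fun x =>
    Sum.rec (fun a => g (toLex (Sum.inl a))) (fun j => toLex (Sum.inl (s j.val))) (ofLex x)
    with hh0
  have hgl : ∀ a : β, ∃ a' : β, g (toLex (Sum.inl a)) = toLex (Sum.inl a') := by
    intro a
    have h1 : g (toLex (Sum.inl a)) < toLex (Sum.inl b) := by
      rw [← hb]; exact g.strictMono (Sum.Lex.inl_lt_inr a _)
    rcases h : ofLex (g (toLex (Sum.inl a))) with a' | j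
    · exact ⟨a', by rw [← h]; rfl⟩
    · exfalso
      have : g (toLex (Sum.inl a)) = toLex (Sum.inr j) := by
        rw [← h]; rfl
      rw [this] at h1
      exact Sum.Lex.not_inr_lt_inl h1
  have hmono : StrictMono h0 := by
    intro x y hxy
    rcases x with a | j <;> rcases y with a' | j'
    · exact g.strictMono hxy
    · show g (toLex (Sum.inl a)) < toLex (Sum.inl (s j'.val))
      obtain ⟨a₀, ha₀⟩ := hgl a
      rw [ha₀]
      have h1 : a₀ ≤ b := by
        rw [← Sum.Lex.inl_le_inl_iff (β := Fin r), ← ha₀, ← hb]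
        exact g.monotone (Sum.Lex.inl_le_inr a _)
      exact Sum.Lex.inl_lt_inl_iff.2 (lt_of_le_of_lt h1 (hbs _))
    · exact absurd hxy Sum.Lex.not_inr_lt_inl
    · exact Sum.Lex.inl_lt_inl_iff.2 (hs (Fin.lt_def.1 (Sum.Lex.inr_lt_inr_iff.1 hxy)))
  refine ⟨OrderEmbedding.ofStrictMono h0 hmono, fun x => ?_⟩
  rcases x with a | j
  · exact hgl a
  · exact ⟨s j.val, rfl⟩

end Main

/-- For `A = B + r` with `B` a chain with no maximal element, if some self-embedding of `A`
maps the least element `0` of the final `r`-element chain into `B`, then the big Ramsey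
degrees of `A` are monotone. -/
theorem statement3 {β : Type*} [LinearOrder β] [NoMaxOrder β] {r : ℕ} (hr : 0 < r)
    (g : (β ⊕ₗ Fin r) ↪o (β ⊕ₗ Fin r))
    (hg : ∃ b : β, g (toLex (Sum.inr (⟨0, hr⟩ : Fin r))) = toLex (Sum.inl b))
    {m n : ℕ} (hm : 1 ≤ m) (hmn : m ≤ n) :
    brd (β ⊕ₗ Fin r) m ≤ brd (β ⊕ₗ Fin r) n := by
  apply sInf_le_sInf
  rintro t ⟨t₀, rfl, hadm⟩
  refine ⟨t₀, rfl, ?_⟩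
  intro k hk χ
  obtain ⟨h, hh⟩ := exists_into_left hr g hg
  obtain ⟨e, he⟩ := hadm k hk (fun F => χ ((Fin.castLEOrderEmb hmn).trans F))
  refine ⟨h.trans e, le_trans (Set.ncard_le_ncard ?_ (Set.toFinite _)) he⟩
  rintro c ⟨f, rfl⟩
  obtain ⟨a, ha⟩ := hh (f ⟨m - 1, Nat.sub_lt hm one_pos⟩)
  obtain ⟨s, hs, has⟩ := exists_strictMono_above a
  obtain ⟨F, hF⟩ := exists_extension_s3 hm hmn (f.trans h)
    (fun i => toLex (Sum.inl (s i)))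
    (fun i j hij => Sum.Lex.inl_lt_inl_iff.2 (hs hij))
    (fun i => by
      show h (f _) < _
      rw [ha]
      exact Sum.Lex.inl_lt_inl_iff.2 (has i))
  refine ⟨F, ?_⟩
  show χ ((Fin.castLEOrderEmb hmn).trans (F.trans e)) = χ ((f.trans h).trans e)
  congr 1
  ext i
  show e (F (Fin.castLE hmn i)) = e (h (f i))
  exact congrArg e (hF i)
end

section
/- Let n, r ∈ ℕ and let B be a chain disjoint from the r-element chain r = {0 < 1 < ⋯ < r−1}. Then for every type τ ⊆ r with |τ| ≤ n, every k ≥ 2 and every coloring χ : Emb_τ(n, B + r) → {0, …, k−1} there exists a suborder U ⊆ B order-isomorphic to B such that χ takes at most T(n − |τ|, B) values on Emb_τ(n, U + r). -/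
/-- The type of an embedding `f : n ↪o B + r`: the set of elements of the final
`r`-element chain hit by `f`. -/
def embTypeSet {β : Type*} [LinearOrder β] {n r : ℕ} (f : Fin n ↪o (β ⊕ₗ Fin r)) :
    Set (Fin r) :=
  {i : Fin r | ∃ j : Fin n, f j = toLex (Sum.inr i)}

/-- Extend a self-embedding of `β` to a self-embedding of `β ⊕ₗ Fin r` which is the
identity on the final `r`-element chain; its range is `U + r` for `U` the range of `e`. -/
def extEmb {β : Type*} [LinearOrder β] {r : ℕ} (e : β ↪o β) :
    (β ⊕ₗ Fin r) ↪o (β ⊕ₗ Fin r) :=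
  OrderEmbedding.ofStrictMono
    (fun x => toLex (Sum.map e id (ofLex x)))
    (by
      intro a b h
      rw [Sum.Lex.lt_def] at h
      cases h with
      | inl h => exact Sum.Lex.inl_lt_inl_iff.2 (e.strictMono h)
      | inr h => exact Sum.Lex.inr_lt_inr_iff.2 h
      | sep a b => exact Sum.Lex.inl_lt_inr _ _)

/-!
Write `n = m + |τ|`. An embedding `f` of `n` into `B + r` of type `τ` is determined by its range,
which is `U' + τ` for an `m`-element set `U' ⊆ B`; so `f` is `appendType τ g` for the embedding
`g` of `m` enumerating `U'`. Composition with `extEmb e` only moves `g`, so a coloring of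
`Emb_τ(n, B + r)` induces one of `Emb(m, B)`, and a copy of `B` that witnesses an admissible
bound for the induced coloring witnesses it for the original one.
-/

theorem brd_eq_top_or_exists_brdAdmissible (α : Type*) [LinearOrder α] (n : ℕ) :
    brd α n = ⊤ ∨ ∃ t : ℕ, BrdAdmissible α n t ∧ brd α n = t := by
  rcases Set.eq_empty_or_nonempty {t : ℕ∞ | ∃ t₀ : ℕ, t = t₀ ∧ BrdAdmissible α n t₀} with h | h
  · exact .inl (by rw [brd, h, sInf_empty])
  · obtain ⟨t, ht, hadm⟩ := csInf_mem h
    exact .inr ⟨t, hadm, ht⟩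

section TypedEmbeddings

variable {β : Type*} [LinearOrder β] {m r : ℕ}

def appendType (τ : Finset (Fin r)) (g : Fin m ↪o β) : Fin (m + τ.card) ↪o β ⊕ₗ Fin r :=
  OrderEmbedding.ofStrictMono (Fin.append (Sum.inlₗ ∘ g) (Sum.inrₗ ∘ τ.orderEmbOfFin rfl)) <| by
    intro a b hab
    rw [Fin.lt_def] at hab
    induction a using Fin.addCases <;> induction b using Fin.addCases <;> simp_all
    omega

@[simp]
theorem appendType_castAdd (τ : Finset (Fin r)) (g : Fin m ↪o β) (i : Fin m) :
    appendType τ g (Fin.castAdd _ i) = Sum.inlₗ (g i) :=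
  Fin.append_left _ _ i

@[simp]
theorem appendType_natAdd (τ : Finset (Fin r)) (g : Fin m ↪o β) (i : Fin τ.card) :
    appendType τ g (Fin.natAdd m i) = Sum.inrₗ (τ.orderEmbOfFin rfl i) :=
  Fin.append_right _ _ i

@[simp]
theorem extEmb_inlₗ (e : β ↪o β) (x : β) : extEmb (r := r) e (Sum.inlₗ x) = Sum.inlₗ (e x) := rfl

@[simp]
theorem extEmb_inrₗ (e : β ↪o β) (i : Fin r) : extEmb e (Sum.inrₗ i) = Sum.inrₗ i := rfl

theorem appendType_trans_extEmb (τ : Finset (Fin r)) (g : Fin m ↪o β) (e : β ↪o β) :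
    (appendType τ g).trans (extEmb e) = appendType τ (g.trans e) := by
  ext i
  induction i using Fin.addCases <;> simp

theorem range_appendType (τ : Finset (Fin r)) (g : Fin m ↪o β) :
    Set.range (appendType τ g) = Sum.inlₗ '' Set.range g ∪ Sum.inrₗ '' τ := by
  ext x
  constructor
  · rintro ⟨i, rfl⟩
    induction i using Fin.addCases <;> simp
  · rintro (⟨_, ⟨i, rfl⟩, rfl⟩ | ⟨j, hj, rfl⟩)
    · exact ⟨_, appendType_castAdd τ g i⟩
    · obtain ⟨i, rfl⟩ : j ∈ Set.range (τ.orderEmbOfFin rfl) := by simpa using hj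
      exact ⟨_, appendType_natAdd τ g i⟩

theorem exists_appendType_eq (τ : Finset (Fin r)) (f : Fin (m + τ.card) ↪o β ⊕ₗ Fin r)
    (hf : embTypeSet f = τ) : ∃ g : Fin m ↪o β, appendType τ g = f := by
  set s : Set β := Sum.inlₗ ⁻¹' Set.range f
  have hinl : Function.Injective (Sum.inlₗ : β → β ⊕ₗ Fin r) :=
    toLex.injective.comp Sum.inl_injective
  have hinr : Function.Injective (Sum.inrₗ : Fin r → β ⊕ₗ Fin r) :=
    toLex.injective.comp Sum.inr_injective
  have hrange : Set.range f = Sum.inlₗ '' s ∪ Sum.inrₗ '' τ := by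
    ext x
    obtain ⟨x | i, rfl⟩ := toLex.surjective x
    · simp [s]
    · rw [← hf]
      simp [embTypeSet, eq_comm]
  have hs : s.Finite := (Set.finite_range f).preimage hinl.injOn
  have hcard : hs.toFinset.card = m := by
    have := Set.ncard_range_of_injective f.injective
    have hdisj : Disjoint (Sum.inlₗ '' s) (Sum.inrₗ '' (τ : Set (Fin r))) :=
      Set.disjoint_left.2 (by rintro _ ⟨x, -, rfl⟩ ⟨i, -, h⟩; cases h)
    rw [hrange, Set.ncard_union_eq hdisj (hs.image _), Set.ncard_image_of_injective _ hinl,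
      Set.ncard_image_of_injective _ hinr, Set.ncard_coe_finset, Nat.card_fin,
      Set.ncard_eq_toFinset_card s hs] at this
    omega
  refine ⟨hs.toFinset.orderEmbOfFin hcard, OrderEmbedding.range_inj.1 ?_⟩
  rw [range_appendType, Finset.range_orderEmbOfFin, Set.Finite.coe_toFinset, hrange]

theorem BrdAdmissible.exists_embTypeSet {t : ℕ} (ht : BrdAdmissible β m t) (τ : Finset (Fin r))
    {k : ℕ} (hk : 2 ≤ k) (χ : (Fin (m + τ.card) ↪o β ⊕ₗ Fin r) → Fin k) :
    ∃ e : β ↪o β, {c : Fin k | ∃ f : Fin (m + τ.card) ↪o β ⊕ₗ Fin r,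
      embTypeSet f = τ ∧ χ (f.trans (extEmb e)) = c}.ncard ≤ t := by
  obtain ⟨e, he⟩ := ht k hk (χ ∘ appendType τ)
  refine ⟨e, le_trans (Set.ncard_le_ncard ?_ (Set.toFinite _)) he⟩
  rintro c ⟨f, hf, rfl⟩
  obtain ⟨g, rfl⟩ := exists_appendType_eq τ f hf
  exact ⟨g, by rw [appendType_trans_extEmb]; rfl⟩

end TypedEmbeddings

/-- For every type `τ ⊆ r` with `|τ| ≤ n`, every `k ≥ 2` and every coloring of the
embeddings of `n` into `B + r` of type `τ`, there is a suborder `U ⊆ B` order-isomorphic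
to `B` (the range of a self-embedding `e` of `B`) such that the coloring takes at most
`T(n - |τ|, B)` values on `Emb_τ(n, U + r)`. -/
theorem statement4 {β : Type*} [LinearOrder β] {n r : ℕ} (τ : Finset (Fin r))
    (hτ : τ.card ≤ n) (k : ℕ) (hk : 2 ≤ k)
    (χ : (Fin n ↪o (β ⊕ₗ Fin r)) → Fin k) :
    ∃ e : β ↪o β,
      (({c : Fin k | ∃ f : Fin n ↪o (β ⊕ₗ Fin r),
          embTypeSet f = ↑τ ∧ χ (f.trans (extEmb e)) = c}).ncard : ℕ∞)
        ≤ brd β (n - τ.card) := by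
  obtain ⟨m, rfl⟩ : ∃ m, n = m + τ.card := ⟨n - τ.card, (Nat.sub_add_cancel hτ).symm⟩
  rw [Nat.add_sub_cancel]
  obtain hT | ⟨t, ht, hT⟩ := brd_eq_top_or_exists_brdAdmissible β m
  · exact ⟨RelEmbedding.refl _, by simp [hT]⟩
  obtain ⟨e, he⟩ := ht.exists_embTypeSet τ hk χ
  exact ⟨e, hT ▸ by exact_mod_cast he⟩
end

section
/- Let B be a chain with no maximal element and let r ∈ ℕ, with B disjoint from the r-element chain r = {0 < 1 < ⋯ < r−1}. Assume that every order embedding g : B + r → B + r satisfies g(i) = i for every i ∈ r. If T(n, B + r) < ∞ for some n ∈ ℕ, then T(n − j, B) < ∞ for every j with 0 ≤ j ≤ min{n, r}. -/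
/-- Extend an embedding of `Fin (n - j)` into `β` to an embedding of `Fin n` into
`β ⊕ₗ Fin r`, sending the top `j` points to the top `j` points of `Fin r`. -/
def extAux {β : Type*} [LinearOrder β] {n r j : ℕ} (hjn : j ≤ n) (hjr : j ≤ r)
    (g : Fin (n - j) ↪o β) : Fin n ↪o (β ⊕ₗ Fin r) :=
  OrderEmbedding.ofStrictMono
    (fun i => if h : (i : ℕ) < n - j then toLex (Sum.inl (g ⟨i, h⟩))
      else toLex (Sum.inr ⟨i + r - n, by omega⟩))
    (by
      intro i₁ i₂ hlt
      have hlt' : (i₁ : ℕ) < i₂ := hlt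
      by_cases h1 : (i₁ : ℕ) < n - j <;> by_cases h2 : (i₂ : ℕ) < n - j
      · simp only [dif_pos h1, dif_pos h2, Sum.Lex.inl_lt_inl_iff]
        exact g.strictMono (Fin.mk_lt_mk.mpr hlt')
      · simp only [dif_pos h1, dif_neg h2]
        exact Sum.Lex.inl_lt_inr _ _
      · omega
      · simp only [dif_neg h1, dif_neg h2, Sum.Lex.inr_lt_inr_iff, Fin.mk_lt_mk]
        have := i₁.2
        omega)

theorem extAux_apply {β : Type*} [LinearOrder β] {n r j : ℕ} (hjn : j ≤ n) (hjr : j ≤ r)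
    (g : Fin (n - j) ↪o β) (i : Fin n) :
    extAux hjn hjr g i = if h : (i : ℕ) < n - j then toLex (Sum.inl (g ⟨i, h⟩))
      else toLex (Sum.inr ⟨i + r - n, by omega⟩) := rfl

theorem extAux_inj {β : Type*} [LinearOrder β] {n r j : ℕ} (hjn : j ≤ n) (hjr : j ≤ r) :
    Function.Injective (extAux (β := β) (r := r) hjn hjr) := by
  intro g g' hgg
  ext m
  have hm : (m : ℕ) < n := by omega
  have h := DFunLike.congr_fun hgg ⟨m, hm⟩
  rw [extAux_apply, extAux_apply] at h
  have hm' : ((⟨(m : ℕ), hm⟩ : Fin n) : ℕ) < n - j := m.2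
  rw [dif_pos hm', dif_pos hm'] at h
  have := toLex.injective h
  have h2 : g ⟨(m : ℕ), m.2⟩ = g' ⟨(m : ℕ), m.2⟩ := Sum.inl_injective this
  simpa using h2

/-- If `B` is a chain with no maximal element, every self-embedding of `B + r` fixes the
final `r`-element chain pointwise, and `T(n, B + r) < ∞`, then `T(n - j, B) < ∞` for
every `0 ≤ j ≤ min n r`. -/
theorem statement5 {β : Type*} [LinearOrder β] [NoMaxOrder β] {r n : ℕ}
    (hfix : ∀ g : (β ⊕ₗ Fin r) ↪o (β ⊕ₗ Fin r), ∀ i : Fin r,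
      g (toLex (Sum.inr i)) = toLex (Sum.inr i))
    (hfin : brd (β ⊕ₗ Fin r) n ≠ ⊤) :
    ∀ j : ℕ, j ≤ min n r → brd β (n - j) ≠ ⊤ := by
  classical
  intro j hj
  have hjn : j ≤ n := le_trans hj (min_le_left _ _)
  have hjr : j ≤ r := le_trans hj (min_le_right _ _)
  -- get a finite admissible bound for (n, β ⊕ₗ Fin r)
  have hne : {t : ℕ∞ | ∃ t₀ : ℕ, t = (t₀ : ℕ∞) ∧ BrdAdmissible (β ⊕ₗ Fin r) n t₀}.Nonempty := by
    rw [Set.nonempty_iff_ne_empty]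
    intro h
    exact hfin (by rw [brd, h, sInf_empty])
  obtain ⟨t, t₀, rfl, hadm⟩ := hne
  have hadmB : BrdAdmissible β (n - j) t₀ := by
    intro k hk χ
    -- lift the coloring
    let χ' : (Fin n ↪o (β ⊕ₗ Fin r)) → Fin k := fun F =>
      if h : ∃ g : Fin (n - j) ↪o β, F = extAux hjn hjr g then χ h.choose else ⟨0, by omega⟩
    have hχ' : ∀ G : Fin (n - j) ↪o β, χ' (extAux hjn hjr G) = χ G := by
      intro G
      have hex : ∃ g, extAux hjn hjr G = extAux (β := β) (r := r) hjn hjr g := ⟨G, rfl⟩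
      simp only [χ', dif_pos hex]
      congr 1
      exact (extAux_inj hjn hjr hex.choose_spec).symm
    obtain ⟨e, he⟩ := hadm k hk χ'
    -- e maps the left copy of β into itself
    have hinl : ∀ b : β, ∃ b', e (toLex (Sum.inl b)) = toLex (Sum.inl b') := by
      intro b
      rcases h' : ofLex (e (toLex (Sum.inl b))) with b' | i
      · exact ⟨b', by rw [← h']; rfl⟩
      · exfalso
        have h1 : e (toLex (Sum.inl b)) = toLex (Sum.inr i) := by rw [← h']; rfl
        have h2 : e (toLex (Sum.inr i)) = toLex (Sum.inr i) := hfix e i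
        have := e.injective (h1.trans h2.symm)
        have := toLex.injective this
        exact Sum.inl_ne_inr this
    let eB : β → β := fun b => (hinl b).choose
    have heB : ∀ b : β, e (toLex (Sum.inl b)) = toLex (Sum.inl (eB b)) :=
      fun b => (hinl b).choose_spec
    have heBmono : StrictMono eB := by
      intro b b' hbb
      have : e (toLex (Sum.inl b)) < e (toLex (Sum.inl b')) :=
        e.strictMono (Sum.Lex.inl_lt_inl_iff.mpr hbb)
      rw [heB, heB] at this
      exact Sum.Lex.inl_lt_inl_iff.mp this
    let eBemb : β ↪o β := OrderEmbedding.ofStrictMono eB heBmono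
    refine ⟨eBemb, le_trans (Set.ncard_le_ncard ?_ (Set.toFinite _)) he⟩
    rintro c ⟨f, rfl⟩
    refine ⟨extAux hjn hjr f, ?_⟩
    have key : (extAux hjn hjr f).trans e = extAux hjn hjr (f.trans eBemb) := by
      ext i
      show e (extAux hjn hjr f i) = extAux hjn hjr (f.trans eBemb) i
      rw [extAux_apply, extAux_apply]
      by_cases h : (i : ℕ) < n - j
      · rw [dif_pos h, dif_pos h, heB]
        rfl
      · rw [dif_neg h, dif_neg h, hfix e]
    rw [key, hχ']
  have hle : brd β (n - j) ≤ (t₀ : ℕ∞) := sInf_le ⟨t₀, rfl, hadmB⟩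
  exact ne_top_of_le_ne_top (ENat.coe_ne_top t₀) hle
end

section
/- Let B be a chain with no maximal element and let r ∈ ℕ, with B disjoint from the r-element chain r = {0 < 1 < ⋯ < r−1}. Assume that every order embedding g : B + r → B + r satisfies g(i) = i for every i ∈ r. If T(n, B + r) < ∞ for some n ∈ ℕ, then T(n, B + r) = Σ_{j=0}^{min{n,r}} C(r, j) · T(n − j, B), where C(r, j) is the binomial coefficient. -/
/-!
An embedding of `Fin n` is determined by its range, so colourings of embeddings are colourings of
`n`-element finite sets. A self-embedding of `β ⊕ₗ γ` fixing `γ` pointwise is `f ⊕ id`, and an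
`n`-set of `β ⊕ₗ γ` is `A ⊕ S` with `S ⊆ γ` and `#A = n - #S`, on which `f ⊕ id` acts through `A`
alone. So a colouring of the `n`-sets of `β ⊕ₗ γ` is a family, indexed by the `S` with `#S ≤ n`,
of colourings of the `(n - #S)`-sets of `β`. One copy of `β` that is good for all of them at once
gives `T(n, β ⊕ₗ γ) ≤ ∑ S, T(n - #S, β)`. Conversely, colouring `A ⊕ S` by the pair of `S` and the
colour of `A` under a colouring of `β` that is bad on every copy gives the reverse inequality.
Grouping the sets `S ⊆ Fin r` by size produces the binomial coefficients.
-/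

open Finset

section Colorings

variable {α κ : Type*} [LinearOrder α]

def colorsOn (χ : Finset α → κ) (n : ℕ) (e : α ↪o α) : Set κ :=
  (fun s => χ (s.map e.toEmbedding)) '' {s | #s = n}

lemma colorsOn_comp {κ' : Type*} (g : κ → κ') (χ : Finset α → κ) (n : ℕ) (e : α ↪o α) :
    colorsOn (g ∘ χ) n e = g '' colorsOn χ n e :=
  Set.image_comp g _ _

lemma colorsOn_trans (χ : Finset α → κ) (n : ℕ) (e₁ e₂ : α ↪o α) :
    colorsOn χ n (e₂.trans e₁) = colorsOn (fun s => χ (s.map e₁.toEmbedding)) n e₂ := by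
  simp only [colorsOn, Finset.map_map]
  rfl

lemma colorsOn_trans_subset (χ : Finset α → κ) (n : ℕ) (e₁ e₂ : α ↪o α) :
    colorsOn χ n (e₂.trans e₁) ⊆ colorsOn χ n e₁ := by
  rw [colorsOn_trans]
  rintro _ ⟨s, hs, rfl⟩
  exact ⟨s.map e₂.toEmbedding, by simpa using hs, rfl⟩

lemma map_univ_trans {n : ℕ} (f : Fin n ↪o α) (e : α ↪o α) :
    univ.map (f.trans e).toEmbedding = (univ.map f.toEmbedding).map e.toEmbedding := by
  rw [Finset.map_map]
  rfl

lemma colorsOn_eq_range (χ : Finset α → κ) (n : ℕ) (e : α ↪o α) :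
    colorsOn χ n e = Set.range fun f : Fin n ↪o α => χ (univ.map (f.trans e).toEmbedding) := by
  ext c
  constructor
  · rintro ⟨s, hs, rfl⟩
    exact ⟨s.orderEmbOfFin hs, by simp only [map_univ_trans, map_orderEmbOfFin_univ]⟩
  · rintro ⟨f, rfl⟩
    exact ⟨univ.map f.toEmbedding, by simp, by simp only [map_univ_trans]⟩

lemma exists_eq_comp_map_univ [Nonempty κ] {n : ℕ} (χ : (Fin n ↪o α) → κ) :
    ∃ χ' : Finset α → κ, ∀ f, χ f = χ' (univ.map f.toEmbedding) := by
  classical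
  refine ⟨fun s => if hs : #s = n then χ (s.orderEmbOfFin hs) else Classical.arbitrary κ,
    fun f => ?_⟩
  have hcard : #(univ.map f.toEmbedding) = n := by simp
  simp only [dif_pos hcard, ← orderEmbOfFin_unique' hcard (fun i => mem_map_of_mem _ (mem_univ i))]

lemma brdAdmissible_iff {n t : ℕ} :
    BrdAdmissible α n t ↔
      ∀ k, 2 ≤ k → ∀ χ : Finset α → Fin k, ∃ e : α ↪o α, (colorsOn χ n e).ncard ≤ t := by
  constructor
  · intro h k hk χ
    obtain ⟨e, he⟩ := h k hk fun f => χ (univ.map f.toEmbedding)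
    exact ⟨e, by rwa [colorsOn_eq_range]⟩
  · intro h k hk χ
    have : Nonempty (Fin k) := ⟨⟨0, by omega⟩⟩
    obtain ⟨χ', hχ'⟩ := exists_eq_comp_map_univ χ
    obtain ⟨e, he⟩ := h k hk χ'
    refine ⟨e, ?_⟩
    rw [colorsOn_eq_range] at he
    simp only [hχ']
    exact he

lemma BrdAdmissible.exists_ncard_colorsOn_le [Finite κ] {n t : ℕ} (h : BrdAdmissible α n t)
    (χ : Finset α → κ) : ∃ e : α ↪o α, (colorsOn χ n e).ncard ≤ t := by
  set k := max 2 (Nat.card κ)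
  let ι : κ → Fin k := Fin.castLE (le_max_right _ _) ∘ Finite.equivFin κ
  have hι : ι.Injective := (Fin.castLE_injective _).comp (Finite.equivFin κ).injective
  obtain ⟨e, he⟩ := brdAdmissible_iff.1 h k (le_max_left _ _) (ι ∘ χ)
  rw [colorsOn_comp, Set.ncard_image_of_injective _ hι] at he
  exact ⟨e, he⟩

lemma BrdAdmissible.brd_le {n t : ℕ} (h : BrdAdmissible α n t) : brd α n ≤ t :=
  sInf_le ⟨t, rfl, h⟩

lemma brdAdmissible_toNat_brd {n : ℕ} (h : brd α n ≠ ⊤) : BrdAdmissible α n (brd α n).toNat := by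
  have hne : {t : ℕ∞ | ∃ t₀ : ℕ, t = t₀ ∧ BrdAdmissible α n t₀}.Nonempty := by
    by_contra hemp
    rw [Set.not_nonempty_iff_eq_empty] at hemp
    exact h (by rw [brd, hemp, sInf_empty])
  obtain ⟨t, ht, hadm⟩ := csInf_mem hne
  rwa [brd, ht, ENat.toNat_natCast]

lemma exists_forall_le_ncard_colorsOn {n T : ℕ} (hT : (T : ℕ∞) ≤ brd α n) :
    ∃ (k : ℕ) (χ : Finset α → Fin k), ∀ e : α ↪o α, T ≤ (colorsOn χ n e).ncard := by
  rcases T with _ | T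
  · exact ⟨1, fun _ => 0, fun _ => Nat.zero_le _⟩
  have hT' : ¬ BrdAdmissible α n T := fun h => by
    have := hT.trans h.brd_le
    norm_cast at this
    omega
  simp only [brdAdmissible_iff, not_forall, not_exists, not_le] at hT'
  obtain ⟨k, -, χ, hχ⟩ := hT'
  exact ⟨k, χ, hχ⟩

lemma exists_forall_ncard_colorsOn_le [Finite κ] {ι : Type*} (I : Finset ι) (χ : ι → Finset α → κ)
    (n t : ι → ℕ) (h : ∀ i ∈ I, BrdAdmissible α (n i) (t i)) :
    ∃ e : α ↪o α, ∀ i ∈ I, (colorsOn (χ i) (n i) e).ncard ≤ t i := by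
  classical
  induction I using Finset.induction_on with
  | empty => exact ⟨RelEmbedding.refl _, by simp⟩
  | insert i I hi ih =>
    obtain ⟨e₁, he₁⟩ := ih fun j hj => h j (mem_insert_of_mem hj)
    obtain ⟨e₂, he₂⟩ :=
      (h i (mem_insert_self i I)).exists_ncard_colorsOn_le fun s => χ i (s.map e₁.toEmbedding)
    refine ⟨e₂.trans e₁, fun j hj => ?_⟩
    rcases mem_insert.1 hj with rfl | hj
    · rwa [colorsOn_trans]
    · exact (Set.ncard_le_ncard (colorsOn_trans_subset _ _ _ _) (Set.toFinite _)).trans (he₁ j hj)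

end Colorings

section SumLex

variable {α₁ α₂ β₁ β₂ : Type*} [PartialOrder α₁] [PartialOrder α₂] [PartialOrder β₁]
  [PartialOrder β₂]

def OrderEmbedding.sumLexMap (f : α₁ ↪o α₂) (g : β₁ ↪o β₂) : α₁ ⊕ₗ β₁ ↪o α₂ ⊕ₗ β₂ :=
  OrderEmbedding.ofMapLEIff (fun x => toLex (Sum.map f g (ofLex x)))
    (by
      intro x y
      obtain ⟨a | b, rfl⟩ := toLex.surjective x <;> obtain ⟨c | d, rfl⟩ := toLex.surjective y <;>
        simp)

@[simp] lemma OrderEmbedding.sumLexMap_inl (f : α₁ ↪o α₂) (g : β₁ ↪o β₂) (a : α₁) :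
    f.sumLexMap g (toLex (Sum.inl a)) = toLex (Sum.inl (f a)) := rfl

@[simp] lemma OrderEmbedding.sumLexMap_inr (f : α₁ ↪o α₂) (g : β₁ ↪o β₂) (b : β₁) :
    f.sumLexMap g (toLex (Sum.inr b)) = toLex (Sum.inr (g b)) := rfl

def Finset.sumLexEquiv {α β : Type*} : Finset (α ⊕ₗ β) ≃ Finset α × Finset β :=
  (Equiv.finsetCongr ofLex).trans Finset.sumEquiv.toEquiv

lemma Finset.card_sumLexEquiv_symm {α β : Type*} (A : Finset α) (B : Finset β) :
    #(sumLexEquiv.symm (A, B)) = #A + #B := by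
  simp [sumLexEquiv, card_disjSum]

lemma Finset.map_sumLexMap_sumLexEquiv_symm (f : α₁ ↪o α₂) (g : β₁ ↪o β₂)
    (A : Finset α₁) (B : Finset β₁) :
    (sumLexEquiv.symm (A, B)).map (f.sumLexMap g).toEmbedding =
      sumLexEquiv.symm (A.map f.toEmbedding, B.map g.toEmbedding) := by
  ext x
  obtain ⟨a | b, rfl⟩ := toLex.surjective x <;> simp [sumLexEquiv]

end SumLex

lemma Set.ncard_biUnion_sigma_mk {ι : Type*} {κ : ι → Type*} (I : Finset ι) (X : ∀ i, Set (κ i))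
    (hX : ∀ i ∈ I, (X i).Finite) :
    (⋃ i ∈ I, Sigma.mk i '' X i).ncard = ∑ i ∈ I, (X i).ncard := by
  rw [← set_biUnion_coe, I.finite_toSet.ncard_biUnion fun i hi => (hX i hi).image _,
    finsum_mem_coe_finset]
  · exact sum_congr rfl fun i _ => ncard_image_of_injective _ sigma_mk_injective
  · intro i _ j _ hij
    simp only [Function.onFun, Set.disjoint_left]
    rintro _ ⟨a, -, rfl⟩ ⟨b, -, hba⟩
    exact hij (congrArg Sigma.fst hba).symm

lemma ENat.sum_le_of_forall_natCast_le {ι : Type*} (s : Finset ι) (b : ι → ℕ∞) (t : ℕ)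
    (h : ∀ T : ι → ℕ, (∀ i ∈ s, (T i : ℕ∞) ≤ b i) → ∑ i ∈ s, T i ≤ t) :
    ∑ i ∈ s, b i ≤ t := by
  classical
  by_cases hfin : ∀ i ∈ s, b i ≠ ⊤
  · rw [← ENat.natCast_toNat (ENat.sum_ne_top.2 hfin), ENat.toNat_sum hfin]
    exact_mod_cast h _ fun i _ => ENat.natCast_toNat_le_self _
  · push Not at hfin
    obtain ⟨i, hi, hbi⟩ := hfin
    have := h (Pi.single i (t + 1)) fun j _ => by
      rcases eq_or_ne j i with rfl | hj <;> simp [*]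
    rw [sum_pi_single', if_pos hi] at this
    omega

lemma Finset.sum_card_le_eq_sum_choose {α M : Type*} [Fintype α] [AddCommMonoid M] (n : ℕ)
    (f : ℕ → M) :
    ∑ S : Finset α with #S ≤ n, f #S =
      ∑ j ∈ range (min n (Fintype.card α) + 1), (Fintype.card α).choose j • f j := by
  rw [sum_filter, ← powerset_univ, sum_powerset_apply_card (fun j => if j ≤ n then f j else 0),
    card_univ]
  simp only [smul_ite, smul_zero]
  rw [← sum_filter]
  congr 1
  ext j
  simp only [mem_filter, mem_range]
  omega

section FixedTop

variable {β γ κ : Type*} [LinearOrder β] [LinearOrder γ]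

lemma colorsOn_sumLexMap_refl (χ : Finset (β ⊕ₗ γ) → κ) (n : ℕ) (f : β ↪o β) :
    colorsOn χ n (f.sumLexMap (OrderIso.refl γ).toOrderEmbedding) =
      ⋃ (S : Finset γ) (_ : #S ≤ n),
        colorsOn (fun A => χ (sumLexEquiv.symm (A, S))) (n - #S) f := by
  have hrefl : ∀ S : Finset γ, S.map (OrderIso.refl γ).toOrderEmbedding.toEmbedding = S :=
    fun _ => Finset.map_refl
  ext c
  simp only [Set.mem_iUnion]
  constructor
  · rintro ⟨s, hs : #s = n, rfl⟩
    obtain ⟨⟨A, S⟩, rfl⟩ := sumLexEquiv.symm.surjective s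
    rw [card_sumLexEquiv_symm] at hs
    refine ⟨S, by omega, A, (by omega : #A = n - #S), ?_⟩
    simp only [map_sumLexMap_sumLexEquiv_symm, hrefl]
  · rintro ⟨S, hS, A, hA : #A = n - #S, rfl⟩
    refine ⟨sumLexEquiv.symm (A, S), (?_ : _ = n), ?_⟩
    · rw [card_sumLexEquiv_symm]
      omega
    · simp only [map_sumLexMap_sumLexEquiv_symm, hrefl]

lemma exists_eq_sumLexMap_refl (e : β ⊕ₗ γ ↪o β ⊕ₗ γ)
    (he : ∀ i, e (toLex (Sum.inr i)) = toLex (Sum.inr i)) :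
    ∃ f : β ↪o β, e = f.sumLexMap (OrderIso.refl γ).toOrderEmbedding := by
  have hinl : ∀ b, ∃ c, e (toLex (Sum.inl b)) = toLex (Sum.inl c) := by
    intro b
    rcases h : ofLex (e (toLex (Sum.inl b))) with c | i
    · exact ⟨c, congrArg toLex h⟩
    · have := e.injective ((congrArg toLex h).trans (he i).symm)
      simp at this
  choose f hf using hinl
  refine ⟨OrderEmbedding.ofStrictMono f fun a b hab => ?_, ?_⟩
  · have := e.strictMono ((Sum.Lex.inl_lt_inl_iff (β := γ)).2 hab)
    simpa [hf] using this
  · ext x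
    obtain ⟨b | i, rfl⟩ := toLex.surjective x
    · rw [hf]
      rfl
    · simp [he]

variable [Fintype γ]

theorem brdAdmissible_sumLex {n : ℕ} (T : Finset γ → ℕ)
    (hT : ∀ S : Finset γ, #S ≤ n → BrdAdmissible β (n - #S) (T S)) :
    BrdAdmissible (β ⊕ₗ γ) n (∑ S : Finset γ with #S ≤ n, T S) := by
  classical
  refine brdAdmissible_iff.2 fun k _ χ => ?_
  obtain ⟨f, hf⟩ := exists_forall_ncard_colorsOn_le {S : Finset γ | #S ≤ n}
    (fun S A => χ (sumLexEquiv.symm (A, S))) (fun S => n - #S) T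
    (fun S hS => hT S (mem_filter.1 hS).2)
  refine ⟨f.sumLexMap (OrderIso.refl γ).toOrderEmbedding, ?_⟩
  calc (colorsOn χ n (f.sumLexMap (OrderIso.refl γ).toOrderEmbedding)).ncard
      = (⋃ S ∈ ({S | #S ≤ n} : Finset (Finset γ)),
          colorsOn (fun A => χ (sumLexEquiv.symm (A, S))) (n - #S) f).ncard := by
        simp only [colorsOn_sumLexMap_refl, mem_filter, mem_univ, true_and]
    _ ≤ ∑ S : Finset γ with #S ≤ n,
          (colorsOn (fun A => χ (sumLexEquiv.symm (A, S))) (n - #S) f).ncard :=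
        set_ncard_biUnion_le _ _
    _ ≤ ∑ S : Finset γ with #S ≤ n, T S := sum_le_sum hf

theorem sum_le_of_brdAdmissible_sumLex
    (hfix : ∀ e : β ⊕ₗ γ ↪o β ⊕ₗ γ, ∀ i, e (toLex (Sum.inr i)) = toLex (Sum.inr i))
    {n t : ℕ} (ht : BrdAdmissible (β ⊕ₗ γ) n t) (T : Finset γ → ℕ)
    (hT : ∀ S : Finset γ, #S ≤ n → (T S : ℕ∞) ≤ brd β (n - #S)) :
    ∑ S : Finset γ with #S ≤ n, T S ≤ t := by
  classical
  have hbad : ∀ S : Finset γ, ∃ (k : ℕ) (χ : Finset β → Fin k),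
      #S ≤ n → ∀ e, T S ≤ (colorsOn χ (n - #S) e).ncard := by
    intro S
    by_cases hS : #S ≤ n
    · obtain ⟨k, χ, hχ⟩ := exists_forall_le_ncard_colorsOn (hT S hS)
      exact ⟨k, χ, fun _ => hχ⟩
    · exact ⟨1, fun _ => 0, fun h => absurd h hS⟩
  choose k χ hχ using hbad
  let label : Finset β × Finset γ → Σ S, Fin (k S) := fun p => ⟨p.2, χ p.2 p.1⟩
  obtain ⟨e, he⟩ := ht.exists_ncard_colorsOn_le (label ∘ sumLexEquiv)
  obtain ⟨f, rfl⟩ := exists_eq_sumLexMap_refl e (hfix e)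
  calc ∑ S : Finset γ with #S ≤ n, T S
      ≤ ∑ S : Finset γ with #S ≤ n, (colorsOn (χ S) (n - #S) f).ncard :=
        sum_le_sum fun S hS => hχ S (mem_filter.1 hS).2 f
    _ = (⋃ S ∈ ({S | #S ≤ n} : Finset (Finset γ)),
          Sigma.mk S '' colorsOn (χ S) (n - #S) f).ncard :=
        (Set.ncard_biUnion_sigma_mk _ _ fun _ _ => Set.toFinite _).symm
    _ ≤ t := by
        simp only [colorsOn_sumLexMap_refl, Function.comp_apply, Equiv.apply_symm_apply] at he
        simp only [mem_filter, mem_univ, true_and, ← colorsOn_comp]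
        exact he

theorem brd_sumLex_le {n : ℕ} :
    brd (β ⊕ₗ γ) n ≤ ∑ S : Finset γ with #S ≤ n, brd β (n - #S) := by
  by_cases hfin : ∀ S ∈ ({S | #S ≤ n} : Finset (Finset γ)), brd β (n - #S) ≠ ⊤
  · rw [← ENat.natCast_toNat (ENat.sum_ne_top.2 hfin), ENat.toNat_sum hfin]
    exact (brdAdmissible_sumLex _ fun S hS =>
      brdAdmissible_toNat_brd (hfin S (by simpa using hS))).brd_le
  · push Not at hfin
    exact le_top.trans_eq (ENat.sum_eq_top.2 hfin).symm

theorem sum_brd_le_brd_sumLex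
    (hfix : ∀ e : β ⊕ₗ γ ↪o β ⊕ₗ γ, ∀ i, e (toLex (Sum.inr i)) = toLex (Sum.inr i)) {n : ℕ} :
    ∑ S : Finset γ with #S ≤ n, brd β (n - #S) ≤ brd (β ⊕ₗ γ) n := by
  refine le_sInf ?_
  rintro _ ⟨t, rfl, ht⟩
  exact ENat.sum_le_of_forall_natCast_le _ _ t fun T hT =>
    sum_le_of_brdAdmissible_sumLex hfix ht T fun S hS => hT S (by simpa using hS)

theorem brd_sumLex_eq
    (hfix : ∀ e : β ⊕ₗ γ ↪o β ⊕ₗ γ, ∀ i, e (toLex (Sum.inr i)) = toLex (Sum.inr i)) (n : ℕ) :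
    brd (β ⊕ₗ γ) n = ∑ S : Finset γ with #S ≤ n, brd β (n - #S) :=
  le_antisymm brd_sumLex_le (sum_brd_le_brd_sumLex hfix)

end FixedTop

theorem statement6_general {β : Type*} [LinearOrder β] {r n : ℕ}
    (hfix : ∀ g : (β ⊕ₗ Fin r) ↪o (β ⊕ₗ Fin r), ∀ i : Fin r,
      g (toLex (Sum.inr i)) = toLex (Sum.inr i)) :
    brd (β ⊕ₗ Fin r) n
      = ∑ j ∈ Finset.range (min n r + 1), (r.choose j : ℕ∞) * brd β (n - j) := by
  rw [brd_sumLex_eq hfix, sum_card_le_eq_sum_choose n fun j => brd β (n - j)]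
  simp [nsmul_eq_mul]

/-- If `B` is a chain with no maximal element, every self-embedding of `B + r` fixes the
final `r`-element chain pointwise, and `T(n, B + r) < ∞`, then
`T(n, B + r) = Σ_{j=0}^{min n r} C(r, j) · T(n - j, B)`. -/
theorem statement6 {β : Type*} [LinearOrder β] [NoMaxOrder β] {r n : ℕ}
    (hfix : ∀ g : (β ⊕ₗ Fin r) ↪o (β ⊕ₗ Fin r), ∀ i : Fin r,
      g (toLex (Sum.inr i)) = toLex (Sum.inr i))
    (hfin : brd (β ⊕ₗ Fin r) n ≠ ⊤) :
    brd (β ⊕ₗ Fin r) n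
      = ∑ j ∈ Finset.range (min n r + 1), (r.choose j : ℕ∞) * brd β (n - j) :=
  statement6_general hfix
end

section
/- Let S be a countable scattered chain, let fin_S : S → S' = S/θ_S be the finite condensation of S, and let I ⊆ S' be an infinite interval of S'. Then I contains infinitely many infinitary points, i.e., there are infinitely many y ∈ I such that fin_S^{-1}(y) is infinite. -/
/-- The finite-condensation relation `θ` on a chain: `x θ y` iff the closed interval
between `x` and `y` is finite. Its classes are the fibers of the finite condensation map
`fin : S → S' = S/θ`; the class of `x` (i.e. `fin⁻¹(fin x)`) is `finClass x`. -/
def finCondRel {α : Type*} [LinearOrder α] (x y : α) : Prop :=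
  (Set.uIcc x y).Finite

/-- The `θ`-class of `x`, i.e. the fiber `fin⁻¹(fin x)` of the finite condensation. -/
def finClass {α : Type*} [LinearOrder α] (x : α) : Set α :=
  {y : α | finCondRel x y}

section Aux

variable {α : Type*} [LinearOrder α]

lemma finCondRel_refl (x : α) : finCondRel x x := by
  simp [finCondRel, Set.uIcc_self]

lemma finCondRel_symm {x y : α} (h : finCondRel x y) : finCondRel y x := by
  rwa [finCondRel, Set.uIcc_comm]

lemma finCondRel_trans {x y z : α} (h1 : finCondRel x y) (h2 : finCondRel y z) :
    finCondRel x z :=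
  Set.Finite.subset (h1.union h2) Set.uIcc_subset_uIcc_union_uIcc

lemma mem_finClass {x y : α} : y ∈ finClass x ↔ finCondRel x y := Iff.rfl

lemma self_mem_finClass (x : α) : x ∈ finClass x := finCondRel_refl x

lemma finClass_eq {x y : α} (h : finCondRel x y) : finClass x = finClass y :=
  Set.ext fun z =>
    ⟨fun hz => finCondRel_trans (finCondRel_symm h) hz, fun hz => finCondRel_trans h hz⟩

lemma finCondRel_of_between {x y z : α} (hxy : x ≤ y) (hyz : y ≤ z)
    (h : finCondRel x z) : finCondRel x y :=
  Set.Finite.subset h (by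
    rw [Set.uIcc_of_le hxy, Set.uIcc_of_le (hxy.trans hyz)]
    exact Set.Icc_subset_Icc le_rfl hyz)

end Aux

/-- Let `S` be a countable scattered chain and let `I` be an infinite interval of the
finite condensation `S' = S/θ`.  Identifying points of `S'` with `θ`-classes (subsets
of `S`), `I` corresponds to a `θ`-saturated interval `J` of `S`; that `I` is infinite
means that the set of classes of elements of `J` is infinite.  Then `I` contains
infinitely many infinitary points: the set of classes of elements of `J` that are
infinite (as subsets of `S`) is infinite. -/
theorem statement8 {α : Type*} [LinearOrder α] [Countable α]
    (hscat : IsEmpty (ℚ ↪o α))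
    (J : Set α) (hJint : J.OrdConnected)
    (hJsat : ∀ x ∈ J, ∀ y : α, finCondRel x y → y ∈ J)
    (hJinf : {s : Set α | ∃ x ∈ J, s = finClass x}.Infinite) :
    {s : Set α | ∃ x ∈ J, s = finClass x ∧ s.Infinite}.Infinite := by
  classical
  by_contra hT
  rw [Set.not_infinite] at hT
  set T : Set (Set α) := {s : Set α | ∃ x ∈ J, s = finClass x ∧ s.Infinite} with hTdef
  -- the set of finite classes of elements of J is infinite
  have hCfin : ({s : Set α | ∃ x ∈ J, s = finClass x} \ T).Infinite := hJinf.diff hT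
  -- D : set of minima of finite classes of elements of J
  set D : Set α :=
    {d | d ∈ J ∧ (finClass d).Finite ∧ ∀ z ∈ finClass d, d ≤ z} with hDdef
  have hCD : ({s : Set α | ∃ x ∈ J, s = finClass x} \ T) ⊆ finClass '' D := by
    rintro s ⟨⟨x, hxJ, rfl⟩, hsT⟩
    have hsfin : (finClass x).Finite := by
      by_contra hinf
      exact hsT ⟨x, hxJ, rfl, hinf⟩
    obtain ⟨m, hm, hmle⟩ := Set.exists_min_image (finClass x) id hsfin
      ⟨x, self_mem_finClass x⟩
    have hcls : finClass m = finClass x := (finClass_eq hm).symm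
    refine ⟨m, ⟨hJsat x hxJ m hm, ?_, ?_⟩, hcls⟩
    · rw [hcls]; exact hsfin
    · intro z hz; rw [hcls] at hz; exact hmle z hz
  have hD : D.Infinite := Set.Infinite.of_image _ (hCfin.mono hCD)
  -- representatives of the (finitely many) infinite classes
  have hTsub : Finite ↥T := hT.to_subtype
  have hrep : ∀ i : ↥T, ∃ x, (i : Set α) = finClass x := by
    rintro ⟨s, x, hxJ, rfl, hinf⟩; exact ⟨x, rfl⟩
  choose rep hrepeq using hrep
  -- the pattern of positions w.r.t. the representatives
  set pat : α → (↥T → Bool) := fun d i => decide (rep i < d) with hpatdef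
  haveI : Infinite ↥D := hD.to_subtype
  obtain ⟨p, hp⟩ := Finite.exists_infinite_fiber (fun d : ↥D => pat (d : α))
  set D₀ : Set α := {d | d ∈ D ∧ pat d = p} with hD₀def
  have hD₀inf : D₀.Infinite := by
    refine Set.infinite_of_injective_forall_mem
      (f := fun e : ↥((fun d : ↥D => pat (d : α)) ⁻¹' {p}) => ((e : ↥D) : α)) ?_ ?_
    · intro a b hab
      exact Subtype.ext (Subtype.ext hab)
    · rintro ⟨⟨d, hdD⟩, hdp⟩
      exact ⟨hdD, hdp⟩
  -- key density step
  have key : ∀ x ∈ D₀, ∀ y ∈ D₀, x < y → ∃ m ∈ D₀, x < m ∧ m < y := by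
    rintro x ⟨⟨hxJ, hxfin, hxmin⟩, hxp⟩ y ⟨⟨hyJ, hyfin, hymin⟩, hyp⟩ hxy
    -- x and y are in different classes
    have hncl : ¬ finCondRel x y := by
      intro h
      exact absurd (hymin x (finCondRel_symm h)) (not_le.mpr hxy)
    have hIcc : (Set.Icc x y).Infinite := by
      rw [← Set.uIcc_of_le hxy.le]
      exact hncl
    obtain ⟨z, hzIcc, hzn⟩ := (hIcc.diff (hxfin.union hyfin)).nonempty
    have hzx : x < z := by
      rcases lt_or_eq_of_le hzIcc.1 with h | h
      · exact h
      · exact absurd (h ▸ self_mem_finClass x) (fun hc => hzn (Or.inl hc))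
    have hzy : z < y := by
      rcases lt_or_eq_of_le hzIcc.2 with h | h
      · exact h
      · exact absurd (h ▸ self_mem_finClass y) (fun hc => hzn (Or.inr hc))
    have hzJ : z ∈ J := hJint.out hxJ hyJ hzIcc
    -- the class of z is finite
    have hzfin : (finClass z).Finite := by
      by_contra hinf
      have hzT : finClass z ∈ T := ⟨z, hzJ, rfl, hinf⟩
      set i : ↥T := ⟨finClass z, hzT⟩ with hi
      set r : α := rep i with hr
      have hrz : finCondRel r z := by
        have : z ∈ finClass r := by rw [← hrepeq i]; exact self_mem_finClass z
        exact this
      have hiff : r < x ↔ r < y := by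
        have := congrFun hxp i
        have h2 := congrFun hyp i
        rw [← h2] at this
        simpa [pat] using this
      by_cases hrx : r < x
      · -- r < x < z and r θ z gives x θ z, contradiction
        have hxz : finCondRel x z := by
          have h1 : finCondRel r x := finCondRel_of_between hrx.le hzx.le hrz
          exact finCondRel_trans (finCondRel_symm h1) hrz
        exact hzn (Or.inl hxz)
      · -- z < y ≤ r and r θ z gives y θ z, contradiction
        have hyr : y ≤ r := not_lt.mp (fun h => hrx (hiff.mpr h))
        have hzy' : finCondRel z y :=
          finCondRel_of_between hzy.le hyr (finCondRel_symm hrz)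
        exact hzn (Or.inr (finCondRel_symm hzy'))
    -- let m be the minimum of the class of z
    obtain ⟨m, hm, hmle⟩ := Set.exists_min_image (finClass z) id hzfin
      ⟨z, self_mem_finClass z⟩
    have hcls : finClass m = finClass z := (finClass_eq hm).symm
    have hmz : m ≤ z := hmle z (self_mem_finClass z)
    have hmJ : m ∈ J := hJsat z hzJ m hm
    have hxm : x < m := by
      by_contra hle
      push_neg at hle
      have : finCondRel m x := finCondRel_of_between hle hzx.le
        (finCondRel_symm hm)
      have hxz : finCondRel x z := finCondRel_trans (finCondRel_symm this)
        (finCondRel_symm hm)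
      exact hzn (Or.inl hxz)
    have hmy : m < y := lt_of_le_of_lt hmz hzy
    refine ⟨m, ⟨⟨hmJ, hcls ▸ hzfin, fun w hw => hmle w (hcls ▸ hw)⟩, ?_⟩, hxm, hmy⟩
    -- m has the same pattern
    funext i
    have hx := congrFun hxp i
    have hy := congrFun hyp i
    simp only [pat] at hx hy ⊢
    have hxyiff : rep i < x ↔ rep i < y := by rw [← decide_eq_decide, hx, hy]
    rw [← hx, decide_eq_decide]
    constructor
    · intro h
      by_contra hrx
      exact (fun hc => hrx (hxyiff.mpr hc)) (h.trans hmy)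
    · intro h
      exact h.trans hxm
  -- D₀ is a countable, nontrivial, densely ordered suborder, so ℚ embeds in it
  haveI : Nontrivial ↥D₀ :=
    Set.nontrivial_coe_sort.mpr hD₀inf.nontrivial
  haveI : DenselyOrdered ↥D₀ := by
    constructor
    rintro ⟨a, ha⟩ ⟨b, hb⟩ hab
    rw [Subtype.mk_lt_mk] at hab
    obtain ⟨m, hm, h1, h2⟩ := key a ha b hb hab
    exact ⟨⟨m, hm⟩, h1, h2⟩
  obtain ⟨e⟩ := Order.embedding_from_countable_to_dense (α := ℚ) (β := ↥D₀)
  exact hscat.false (e.trans (OrderEmbedding.subtype _))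
end

section
/- Let S be a countable scattered chain of infinite Hausdorff rank, i.e., for every n ∈ ℕ the n-fold iterated finite condensation S^[n] has more than one element. Then there exists an infinite sequence δ = (δ_0, δ_1, δ_2, …) ∈ {+, −}^ω such that for every k ≥ 1 the chain ω^(δ↾k) = ω^(δ_0)·ω^(δ_1)·⋯·ω^(δ_{k−1}) embeds into S. -/
/-- `iterRel n x y` holds iff `x` and `y` are identified in the `n`-fold iterated finite
condensation `S^[n]` of the chain (where `S^[0] = S` and `S^[k+1] = S^[k]/θ`, `θ` being the
relation "the closed interval between the two points is finite").  Indeed, `x, y` are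
identified in `S^[k+1]` iff the interval between their images in `S^[k]` is finite, i.e.
iff the interval `[x ⊓ y, x ⊔ y]` of `S` is covered by finitely many `iterRel k`-classes. -/
def iterRel {α : Type*} [LinearOrder α] : ℕ → α → α → Prop
  | 0 => fun x y => x = y
  | k + 1 => fun x y => ∃ F : Finset α, ∀ z ∈ Set.uIcc x y, ∃ w ∈ F, iterRel k z w

/-- `ω` if `b = true`, `ω* = ℕᵒᵈ` if `b = false`. -/
abbrev OmegaSign : Bool → Type
  | true => ℕ
  | false => ℕᵒᵈ

instance instOmegaSignLO : ∀ b : Bool, LinearOrder (OmegaSign b)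
  | true => inferInstanceAs (LinearOrder ℕ)
  | false => inferInstanceAs (LinearOrder ℕᵒᵈ)

/-- The chain `ω^(δ↾k) = ω^(δ 0) · ω^(δ 1) · ⋯ · ω^(δ (k-1))`, where the product `A·B` of
chains is the lexicographic sum `Σ_{a∈A} B = A ×ₗ B`, associating to the left
(`OmegaPow δ 0` is the one-element chain, a neutral factor). -/
def OmegaPow (δ : ℕ → Bool) : ℕ → Type
  | 0 => PUnit
  | k + 1 => (OmegaPow δ k) ×ₗ (OmegaSign (δ k))

instance instOmegaPowLO (δ : ℕ → Bool) : ∀ k : ℕ, LinearOrder (OmegaPow δ k)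
  | 0 => inferInstanceAs (LinearOrder PUnit)
  | k + 1 =>
    @Prod.Lex.instLinearOrder (OmegaPow δ k) (OmegaSign (δ k)) (instOmegaPowLO δ k) (instOmegaSignLO (δ k))

/-!
If `x` and `y` are not identified in `S^[k+1]`, the interval between them contains infinitely
many points that are pairwise not identified in `S^[k]`; by Ramsey's theorem a subsequence `a` of
them is strictly monotone or strictly antitone. By induction each interval between `a (2n)` and
`a (2n+1)` contains a copy of some `ω^(δₙ↾k)`, and after passing to a further subsequence all `δₙ`
share their first `k` signs. These copies are then lined up along `ω` or `ω*`, which embeds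
`ω^(±)·ω^(δ↾k) ≅ ω^((±,δ)↾(k+1))`.

So for every `k` some `ω^(δ↾k)` embeds into `S`. Whether it does depends only on `δ↾k` and passes
to shorter prefixes, so these conditions cut out a decreasing sequence of nonempty closed sets in
the compact space `{+,-}^ω`, whose intersection provides a single `δ`.
-/

open Set

theorem exists_strictMono_or_strictAnti_comp {β : Type*} [LinearOrder β] {f : ℕ → β}
    (hf : Function.Injective f) : ∃ g : ℕ ↪o ℕ, StrictMono (f ∘ g) ∨ StrictAnti (f ∘ g) := by
  obtain ⟨g, hinc | hdec⟩ := exists_increasing_or_nonincreasing_subseq (· < ·) f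
  · exact ⟨g, Or.inl hinc⟩
  · exact ⟨g, Or.inr fun m n hmn =>
      (not_lt.1 (hdec m n hmn)).lt_of_ne (hf.ne (g.injective.ne hmn.ne'))⟩

theorem exists_orderEmbedding_forall_eq_of_lt {β : Type*} [Finite β] (k : ℕ)
    (δs : ℕ → ℕ → β) : ∃ φ : ℕ ↪o ℕ, ∀ n, ∀ i < k, δs (φ n) i = δs (φ 0) i := by
  classical
  let prefixOf (n : ℕ) (i : Fin k) : β := δs n i
  obtain ⟨v, hv⟩ := Finite.exists_infinite_fiber prefixOf
  have hφ (n i : ℕ) (hi : i < k) : δs (Nat.orderEmbeddingOfSet _ n) i = v ⟨i, hi⟩ :=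
    congrFun (Nat.Subtype.ofNat (prefixOf ⁻¹' {v}) n).2 ⟨i, hi⟩
  exact ⟨Nat.orderEmbeddingOfSet _, fun n i hi => (hφ n i hi).trans (hφ 0 i hi).symm⟩

theorem StrictMono.lt_of_mem_uIcc {α : Type*} [LinearOrder α] {a : ℕ → α} (ha : StrictMono a)
    {i j l m : ℕ} (hij : i ≤ j) (hjl : j < l) (hlm : l ≤ m) {u v : α}
    (hu : u ∈ uIcc (a i) (a j)) (hv : v ∈ uIcc (a l) (a m)) : u < v := by
  rw [uIcc_of_le (ha.monotone hij)] at hu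
  rw [uIcc_of_le (ha.monotone hlm)] at hv
  exact hu.2.trans_lt ((ha hjl).trans_le hv.1)

theorem StrictAnti.lt_of_mem_uIcc {α : Type*} [LinearOrder α] {a : ℕ → α} (ha : StrictAnti a)
    {i j l m : ℕ} (hij : i ≤ j) (hjl : j < l) (hlm : l ≤ m) {u v : α}
    (hu : u ∈ uIcc (a i) (a j)) (hv : v ∈ uIcc (a l) (a m)) : v < u :=
  ha.dual_right.lt_of_mem_uIcc (u := OrderDual.toDual u) (v := OrderDual.toDual v) hij hjl hlm
    (by rwa [Function.comp_apply, Function.comp_apply, uIcc_toDual])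
    (by rwa [Function.comp_apply, Function.comp_apply, uIcc_toDual])

theorem isClosed_of_forall_eq_of_lt {X : Type*} [TopologicalSpace X] [DiscreteTopology X]
    {s : Set (ℕ → X)} (k : ℕ) (hs : ∀ x y, (∀ i < k, x i = y i) → x ∈ s → y ∈ s) :
    IsClosed s := by
  let π : (ℕ → X) → (Fin k → X) := fun x i => x i
  have hπ : s = π ⁻¹' (π '' s) := by
    refine (subset_preimage_image π s).antisymm ?_
    rintro y ⟨x, hx, hxy⟩
    exact hs x y (fun i hi => congrFun hxy ⟨i, hi⟩) hx
  rw [hπ]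
  exact (isClosed_discrete _).preimage (continuous_pi fun i => continuous_apply _)

namespace OrderEmbedding

variable {ι β α : Type*} [LinearOrder ι] [LinearOrder β] [LinearOrder α]

def prodLexOfSeparated (E : ι → β ↪o α) (hE : ∀ i j, i < j → ∀ u v, E i u < E j v) :
    ι ×ₗ β ↪o α :=
  ofStrictMono (fun p => E (ofLex p).1 (ofLex p).2) <| by
    rintro ⟨i, u⟩ ⟨j, v⟩ h
    obtain hij | ⟨rfl, huv⟩ := Prod.Lex.toLex_lt_toLex.mp h
    · exact hE i j hij u v
    · exact (E i).strictMono huv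

end OrderEmbedding

def seqCons {β : Type*} (b : β) (δ : ℕ → β) : ℕ → β
  | 0 => b
  | i + 1 => δ i

section IterRel

variable {α : Type*} [LinearOrder α]

theorem iterRel_refl : ∀ (k : ℕ) (x : α), iterRel k x x
  | 0, _ => rfl
  | k + 1, x => ⟨{x}, fun z hz => ⟨x, Finset.mem_singleton_self x, by
      rw [uIcc_self, mem_singleton_iff] at hz
      exact hz ▸ iterRel_refl k x⟩⟩

theorem iterRel_symm : ∀ {k : ℕ} {x y : α}, iterRel k x y → iterRel k y x
  | 0, _, _, h => h.symm
  | _ + 1, x, y, ⟨F, hF⟩ => ⟨F, fun z hz => hF z (uIcc_comm y x ▸ hz)⟩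

theorem exists_seq_pairwise_not_iterRel {k : ℕ} {x y : α} (h : ¬ iterRel (k + 1) x y) :
    ∃ f : ℕ → α, (∀ n, f n ∈ uIcc x y) ∧ Pairwise fun m n => ¬ iterRel k (f m) (f n) := by
  have : Std.Symm fun u v : α => ¬ iterRel k u v := ⟨fun _ _ huv hvu => huv (iterRel_symm hvu)⟩
  refine exists_seq_of_forall_finset_exists' (· ∈ uIcc x y) (fun u v => ¬ iterRel k u v)
    fun F _ => ?_
  by_contra! hF
  exact h ⟨F, fun z hz => (hF z hz).imp fun _ ⟨hw, hwz⟩ => ⟨hw, iterRel_symm hwz⟩⟩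

end IterRel

instance OmegaSign.instInhabited : ∀ b : Bool, Inhabited (OmegaSign b)
  | true => ⟨(0 : ℕ)⟩
  | false => ⟨OrderDual.toDual 0⟩

namespace OmegaPow

instance instUniqueZero (δ : ℕ → Bool) : Unique (OmegaPow δ 0) :=
  inferInstanceAs (Unique PUnit)

def congrIso : ∀ {k : ℕ} {δ₁ δ₂ : ℕ → Bool}, (∀ i < k, δ₁ i = δ₂ i) →
    OmegaPow δ₁ k ≃o OmegaPow δ₂ k
  | 0, _, _, _ => OrderIso.refl _
  | k + 1, _, _, h =>
    Prod.Lex.prodLexCongr (congrIso fun i hi => h i (hi.trans k.lt_succ_self))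
      (h k k.lt_succ_self ▸ OrderIso.refl _)

def consIso (b : Bool) (δ : ℕ → Bool) :
    ∀ k : ℕ, OmegaPow (seqCons b δ) (k + 1) ≃o OmegaSign b ×ₗ OmegaPow δ k
  | 0 => (Prod.Lex.uniqueProd _ _).trans (Prod.Lex.prodUnique _ _).symm
  | k + 1 => (Prod.Lex.prodLexCongr (consIso b δ k) (OrderIso.refl _)).trans
      (Prod.Lex.prodLexAssoc _ _ _)

def embeddingSucc (δ : ℕ → Bool) (k : ℕ) : OmegaPow δ k ↪o OmegaPow δ (k + 1) :=
  OrderEmbedding.ofStrictMono (fun u => toLex (u, default)) fun _ _ h =>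
    Prod.Lex.toLex_lt_toLex.mpr (Or.inl h)

end OmegaPow

section Embeddings

variable {α : Type*} [LinearOrder α]

theorem exists_omegaPow_succ_embedding {δ : ℕ → Bool} {k : ℕ} (b : Bool)
    (E : OmegaSign b → OmegaPow δ k ↪o α) (hE : ∀ i j, i < j → ∀ u v, E i u < E j v) :
    ∃ e : OmegaPow (seqCons b δ) (k + 1) ↪o α, range e ⊆ ⋃ i, range (E i) :=
  ⟨(OmegaPow.consIso b δ k).toOrderEmbedding.trans (OrderEmbedding.prodLexOfSeparated E hE),
    range_subset_iff.2 fun _ => mem_iUnion.2 ⟨_, mem_range_self _⟩⟩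

theorem exists_omegaPow_embedding_of_not_iterRel :
    ∀ (k : ℕ) {x y : α}, ¬ iterRel k x y →
      ∃ (δ : ℕ → Bool) (e : OmegaPow δ k ↪o α), range e ⊆ uIcc x y
  | 0, x, _, _ =>
    ⟨fun _ => true, OrderEmbedding.ofStrictMono (fun _ => x) (Subsingleton.strictMono _),
      range_subset_iff.2 fun _ => left_mem_uIcc⟩
  | k + 1, x, y, h => by
    obtain ⟨f, hf_mem, hf_far⟩ := exists_seq_pairwise_not_iterRel h
    have hf_inj : Function.Injective f := fun m n hfmn =>
      by_contra fun hmn => hf_far hmn (by rw [hfmn]; exact iterRel_refl k _)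
    obtain ⟨g, hg⟩ := exists_strictMono_or_strictAnti_comp hf_inj
    set a := f ∘ g
    have hpair (n : ℕ) : ∃ (δ : ℕ → Bool) (e : OmegaPow δ k ↪o α),
        range e ⊆ uIcc (a (2 * n)) (a (2 * n + 1)) :=
      exists_omegaPow_embedding_of_not_iterRel k (hf_far (g.injective.ne (by omega)))
    choose δs es hes using hpair
    obtain ⟨φ, hφ⟩ := exists_orderEmbedding_forall_eq_of_lt k δs
    let E (n : ℕ) : OmegaPow (δs (φ 0)) k ↪o α :=
      (OmegaPow.congrIso (hφ n)).symm.toOrderEmbedding.trans (es (φ n))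
    have hE (n : ℕ) (u) : E n u ∈ uIcc (a (2 * φ n)) (a (2 * φ n + 1)) := hes _ (mem_range_self _)
    have hsep {m n : ℕ} (hmn : m < n) : 2 * φ m + 1 < 2 * φ n := by
      have := φ.strictMono hmn
      omega
    have hsub (n : ℕ) : range (E n) ⊆ uIcc x y := range_subset_iff.2 fun u =>
      ordConnected_uIcc.uIcc_subset (hf_mem _) (hf_mem _) (hE n u)
    rcases hg with hmono | hanti
    · obtain ⟨e, he⟩ := exists_omegaPow_succ_embedding true E fun m n hmn u v =>
        hmono.lt_of_mem_uIcc (by omega) (hsep hmn) (by omega) (hE m u) (hE n v)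
      exact ⟨_, e, he.trans (iUnion_subset hsub)⟩
    · obtain ⟨e, he⟩ := exists_omegaPow_succ_embedding false (E ∘ OrderDual.ofDual)
        fun m n hmn u v => hanti.lt_of_mem_uIcc (by omega) (hsep hmn) (by omega) (hE _ v) (hE _ u)
      exact ⟨_, e, he.trans (iUnion_subset fun i => hsub _)⟩

theorem exists_forall_omegaPow_embedding
    (h : ∀ k, ∃ δ : ℕ → Bool, Nonempty (OmegaPow δ k ↪o α)) :
    ∃ δ : ℕ → Bool, ∀ k, Nonempty (OmegaPow δ k ↪o α) := by
  let t (k : ℕ) : Set (ℕ → Bool) := {δ | Nonempty (OmegaPow δ k ↪o α)}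
  have ht_closed (k : ℕ) : IsClosed (t k) := isClosed_of_forall_eq_of_lt k
    fun _ _ hδ ⟨e⟩ => ⟨(OmegaPow.congrIso hδ).symm.toOrderEmbedding.trans e⟩
  have ht_anti (k : ℕ) : t (k + 1) ⊆ t k := fun _ ⟨e⟩ => ⟨(OmegaPow.embeddingSucc _ k).trans e⟩
  obtain ⟨δ, hδ⟩ := IsCompact.nonempty_iInter_of_sequence_nonempty_isCompact_isClosed
    t ht_anti h (ht_closed 0).isCompact ht_closed
  exact ⟨δ, mem_iInter.1 hδ⟩

end Embeddings

theorem statement9_general {α : Type*} [LinearOrder α]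
    (hrank : ∀ n : ℕ, ∃ x y : α, ¬ iterRel n x y) :
    ∃ δ : ℕ → Bool, ∀ k : ℕ, 1 ≤ k → Nonempty (OmegaPow δ k ↪o α) := by
  obtain ⟨δ, hδ⟩ := exists_forall_omegaPow_embedding fun k => by
    obtain ⟨x, y, hxy⟩ := hrank k
    obtain ⟨δ, e, -⟩ := exists_omegaPow_embedding_of_not_iterRel k hxy
    exact ⟨δ, ⟨e⟩⟩
  exact ⟨δ, fun k _ => hδ k⟩

/-- For a countable scattered chain `S` of infinite Hausdorff rank (every iterated finite
condensation `S^[n]` has more than one element), there is a sequence `δ ∈ {+,-}^ω` such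
that `ω^(δ↾k)` embeds into `S` for every `k ≥ 1`. -/
theorem statement9 {α : Type*} [LinearOrder α] [Countable α]
    (hscat : IsEmpty (ℚ ↪o α))
    (hrank : ∀ n : ℕ, ∃ x y : α, ¬ iterRel n x y) :
    ∃ δ : ℕ → Bool, ∀ k : ℕ, 1 ≤ k → Nonempty (OmegaPow δ k ↪o α) :=
  statement9_general hrank
end

section
/- For every choice of integers s ≥ 1 and m_0, m_1, …, m_{s−1} ≥ 1 there is an integer D = D(s; m_0, …, m_{s−1}) such that for every k ≥ 2 and every coloring χ : [ω]^{m_0} × [ω]^{m_1} × ⋯ × [ω]^{m_{s−1}} → {0, …, k−1} there is an infinite subset U ⊆ ω such that χ takes at most D values on [U]^{m_0} × [U]^{m_1} × ⋯ × [U]^{m_{s−1}}. -/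
/-- Infinite Ramsey theorem, relative form. -/
theorem myRamsey : ∀ (m : ℕ) {k : ℕ} (c : Finset ℕ → Fin k) (S : Set ℕ), S.Infinite →
    ∃ U : Set ℕ, U ⊆ S ∧ U.Infinite ∧ ∃ r : Fin k,
      ∀ A : Finset ℕ, ↑A ⊆ U → A.card = m → c A = r := by
  intro m
  induction m with
  | zero =>
    intro k c S hS
    refine ⟨S, subset_rfl, hS, c ∅, fun A _ hA => ?_⟩
    rw [Finset.card_eq_zero] at hA; rw [hA]
  | succ m IH =>
    intro k c S hS
    have step : ∀ T : {T : Set ℕ // T.Infinite}, ∃ (a : ℕ) (T' : {T : Set ℕ // T.Infinite})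
        (r : Fin k), a ∈ T.1 ∧ T'.1 ⊆ T.1 ∧ (∀ x ∈ T'.1, a < x) ∧
        ∀ A : Finset ℕ, ↑A ⊆ T'.1 → A.card = m → c (insert a A) = r := by
      rintro ⟨T, hT⟩
      obtain ⟨a, haT⟩ := hT.nonempty
      have h1 : (T \ {x | x ≤ a}).Infinite := hT.diff (Set.finite_le_nat a)
      obtain ⟨U', hU'sub, hU'inf, r, hr⟩ := IH (fun A => c (insert a A)) _ h1
      refine ⟨a, ⟨U', hU'inf⟩, r, haT, fun x hx => (hU'sub hx).1,
        fun x hx => ?_, hr⟩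
      have := (hU'sub hx).2
      simp only [Set.mem_setOf_eq] at this
      omega
    choose fa fT fr h1 h2 h3 h4 using step
    let seq : ℕ → {T : Set ℕ // T.Infinite} := fun n => n.rec ⟨S, hS⟩ (fun _ T => fT T)
    have hseq : ∀ n, seq (n + 1) = fT (seq n) := fun n => rfl
    have hmono : ∀ n n', n ≤ n' → (seq n').1 ⊆ (seq n).1 := by
      intro n n' h
      induction n' with
      | zero =>
        have : n = 0 := by omega
        subst this; exact subset_rfl
      | succ p ih =>
        rcases Nat.lt_or_ge n (p+1) with h' | h'
        · exact (ih (by omega)).trans' (by rw [hseq]; exact h2 (seq p))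
        · have : n = p + 1 := by omega
          subst this; exact subset_rfl
    have haseq : ∀ n, fa (seq n) ∈ (seq n).1 := fun n => h1 (seq n)
    have hamono : StrictMono (fun n => fa (seq n)) := by
      apply strictMono_nat_of_lt_succ
      intro n
      exact h3 (seq n) _ (by rw [← hseq]; exact haseq (n+1))
    obtain ⟨r, hrinf⟩ := Finite.exists_infinite_fiber (fun n => fr (seq n))
    rw [Set.infinite_coe_iff] at hrinf
    refine ⟨(fun n => fa (seq n)) '' ((fun n => fr (seq n)) ⁻¹' {r}), ?_, ?_, r, ?_⟩
    · rintro x ⟨n, _, rfl⟩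
      exact hmono 0 n (Nat.zero_le n) (haseq n)
    · exact hrinf.image (hamono.injective.injOn)
    · intro A hAU hAcard
      have hne : A.Nonempty := Finset.card_pos.mp (by omega)
      have hxA := A.min'_mem hne
      obtain ⟨n, hnN, hxn⟩ := hAU hxA
      replace hxn : fa (seq n) = A.min' hne := hxn
      have hB : ↑(A.erase (A.min' hne)) ⊆ (seq (n+1)).1 := by
        intro b hb
        simp only [Finset.coe_erase, Set.mem_diff, Finset.mem_coe, Set.mem_singleton_iff] at hb
        obtain ⟨hbA, hbx⟩ := hb
        obtain ⟨n', hn'N, hxn'⟩ := hAU hbA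
        replace hxn' : fa (seq n') = b := hxn'
        have hlt : fa (seq n) < fa (seq n') := by
          rw [hxn, hxn']
          exact lt_of_le_of_ne (A.min'_le b hbA) (Ne.symm hbx)
        have : n < n' := by
          by_contra h
          exact absurd hlt (not_lt.mpr (hamono.monotone (not_lt.mp h)))
        rw [← hxn']
        exact hmono (n+1) n' this (haseq n')
      have hcard : (A.erase (A.min' hne)).card = m := by
        rw [Finset.card_erase_of_mem hxA]; omega
      have := h4 (seq n) _ hB hcard
      rw [hxn, Finset.insert_erase hxA] at this
      rw [this]
      exact hnN

/-- Simultaneous Ramsey for finitely many colorings. -/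
theorem myRamseyMulti {k : ℕ} (M : ℕ) {P : Type} (t : Finset P) (c : P → Finset ℕ → Fin k) :
    ∀ S : Set ℕ, S.Infinite → ∃ U : Set ℕ, U ⊆ S ∧ U.Infinite ∧
      ∀ p ∈ t, ∃ r : Fin k, ∀ A : Finset ℕ, ↑A ⊆ U → A.card = M → c p A = r := by
  classical
  induction t using Finset.induction with
  | empty => exact fun S hS => ⟨S, subset_rfl, hS, by simp⟩
  | @insert p t hp ih =>
    intro S hS
    obtain ⟨U, hUS, hUinf, hU⟩ := ih S hS
    obtain ⟨V, hVU, hVinf, r, hr⟩ := myRamsey M (c p) U hUinf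
    refine ⟨V, hVU.trans hUS, hVinf, fun q hq => ?_⟩
    rcases Finset.mem_insert.mp hq with rfl | hq
    · exact ⟨r, hr⟩
    · obtain ⟨r', hr'⟩ := hU q hq
      exact ⟨r', fun A hA hAc => hr' A (hA.trans hVU) hAc⟩

/-- Infinite product Ramsey theorem: for all `s ≥ 1` and `m₀, …, m_{s-1} ≥ 1` there is an
integer `D` such that for every `k ≥ 2` and every coloring
`χ : [ω]^{m₀} × ⋯ × [ω]^{m_{s-1}} → {0, …, k-1}` there is an infinite `U ⊆ ω` such that
`χ` takes at most `D` values on `[U]^{m₀} × ⋯ × [U]^{m_{s-1}}`. -/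
theorem statement14 (s : ℕ) (hs : 1 ≤ s) (m : Fin s → ℕ) (hm : ∀ i, 1 ≤ m i) :
    ∃ D : ℕ, ∀ k : ℕ, 2 ≤ k →
      ∀ χ : (∀ i : Fin s, {A : Finset ℕ // A.card = m i}) → Fin k,
        ∃ U : Set ℕ, U.Infinite ∧
          ({c : Fin k | ∃ g : ∀ i : Fin s, {A : Finset ℕ // A.card = m i},
              (∀ i, ↑(g i).1 ⊆ U) ∧ χ g = c}).ncard ≤ D := by
  classical
  set M : ℕ := ∑ i, m i with hM
  refine ⟨Fintype.card (∀ i : Fin s, {A : Finset (Fin M) // A.card = m i}), ?_⟩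
  intro k hk χ
  -- for each pattern q, a coloring of M-subsets of ℕ
  set Pat := ∀ i : Fin s, {A : Finset (Fin M) // A.card = m i} with hPat
  let cq : Pat → Finset ℕ → Fin k := fun q A =>
    if h : A.card = M then
      χ (fun i => ⟨(q i).1.image (fun j => A.orderEmbOfFin h j), by
        rw [Finset.card_image_of_injective _ (A.orderEmbOfFin h).injective, (q i).2]⟩)
    else ⟨0, by omega⟩
  obtain ⟨U, _, hUinf, hU⟩ := myRamseyMulti M Finset.univ cq Set.univ Set.infinite_univ
  have hU' : ∀ q : Pat, ∃ r : Fin k, ∀ A : Finset ℕ, ↑A ⊆ U → A.card = M → cq q A = r :=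
    fun q => hU q (Finset.mem_univ q)
  choose r hr using hU'
  refine ⟨U, hUinf, ?_⟩
  have hsub : {c : Fin k | ∃ g : ∀ i : Fin s, {A : Finset ℕ // A.card = m i},
      (∀ i, ↑(g i).1 ⊆ U) ∧ χ g = c} ⊆ Set.range r := by
    rintro c ⟨g, hg, rfl⟩
    -- union of the pieces
    set B : Finset ℕ := Finset.univ.biUnion (fun i => (g i).1) with hB
    have hBU : ↑B ⊆ U := by
      intro x hx
      simp only [hB, Finset.coe_biUnion, Finset.mem_coe, Finset.coe_univ, Set.mem_univ,
        Set.iUnion_true, Set.mem_iUnion] at hx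
      obtain ⟨i, hi⟩ := hx
      exact hg i hi
    have hBM : B.card ≤ M := le_trans (Finset.card_biUnion_le)
      (le_of_eq (Finset.sum_congr rfl fun a _ => (g a).2))
    -- extend B to an M-element subset A of U
    obtain ⟨C, hCsub, hCcard⟩ := (hUinf.diff (B.finite_toSet)).exists_subset_card_eq (M - B.card)
    have hdisj : Disjoint B C := by
      rw [Finset.disjoint_left]
      intro x hx hxC
      exact (hCsub hxC).2 hx
    set A : Finset ℕ := B ∪ C with hA
    have hAU : ↑A ⊆ U := by
      intro x hx
      rcases Finset.mem_union.mp hx with h | h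
      · exact hBU h
      · exact (hCsub h).1
    have hAcard : A.card = M := by
      rw [hA, Finset.card_union_of_disjoint hdisj, hCcard]; omega
    set e : Fin M ↪o ℕ := A.orderEmbOfFin hAcard with he
    have hBA : B ⊆ A := Finset.subset_union_left
    -- each g i sits inside A; record its positions
    have hsurj : ∀ x ∈ A, ∃ j : Fin M, e j = x := by
      intro x hx
      have : x ∈ Set.range e := by
        rw [he, Finset.range_orderEmbOfFin]; exact hx
      exact this
    have himg : ∀ i, (Finset.univ.filter (fun j : Fin M => e j ∈ (g i).1)).image
        (fun j : Fin M => (e j : ℕ)) = (g i).1 := by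
      intro i
      ext x
      simp only [Finset.mem_image, Finset.mem_filter, Finset.mem_univ, true_and]
      constructor
      · rintro ⟨j, hj, rfl⟩; exact hj
      · intro hx
        have hxA : x ∈ A := hBA (Finset.mem_biUnion.mpr ⟨i, Finset.mem_univ i, hx⟩)
        obtain ⟨j, hj⟩ := hsurj x hxA
        exact ⟨j, by rw [hj]; exact hx, hj⟩
    let q : Pat := fun i => ⟨Finset.univ.filter (fun j : Fin M => e j ∈ (g i).1), by
      have := himg i
      rw [← Finset.card_image_of_injective _ e.injective, this, (g i).2]⟩
    refine ⟨q, ?_⟩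
    have := hr q A hAU hAcard
    rw [← this]
    show cq q A = χ g
    rw [show cq q A = χ (fun i => ⟨(q i).1.image (fun j => A.orderEmbOfFin hAcard j), by
        rw [Finset.card_image_of_injective _ (A.orderEmbOfFin hAcard).injective, (q i).2]⟩)
      from dif_pos hAcard]
    congr 1
    funext i
    exact Subtype.ext (himg i)
  calc ({c : Fin k | ∃ g : ∀ i : Fin s, {A : Finset ℕ // A.card = m i},
      (∀ i, ↑(g i).1 ⊆ U) ∧ χ g = c}).ncard
      ≤ (Set.range r).ncard := Set.ncard_le_ncard hsub (Set.finite_range r)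
    _ ≤ Fintype.card Pat := by
        rw [← Set.image_univ]
        calc (r '' Set.univ).ncard ≤ (Set.univ : Set Pat).ncard := Set.ncard_image_le Set.finite_univ
          _ = Fintype.card Pat := by rw [Set.ncard_univ, Nat.card_eq_fintype_card]
end

section
/- Let (S_k)_{k∈ω} be a sequence of chains such that S_k embeds into S_{k+1} for every k ∈ ω, and let S = Σ_{k∈ω} S_k be their lexicographic sum indexed by ω. Then S is additively indecomposable: for all chains A and B, if S embeds into A + B then S embeds into A or S embeds into B. -/
private lemma getLeft_lt_aux {A B : Type*} [LinearOrder A] [LinearOrder B] {x y : A ⊕ B}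
    (hx : x.isLeft) (hy : y.isLeft) (h : toLex x < toLex y) :
    x.getLeft hx < y.getLeft hy := by
  cases x with
  | inr b => simp at hx
  | inl a => cases y with
    | inr b => simp at hy
    | inl a' => simpa using Sum.Lex.inl_lt_inl_iff.1 h

private lemma getRight_lt_aux {A B : Type*} [LinearOrder A] [LinearOrder B] {x y : A ⊕ B}
    (hx : x.isRight) (hy : y.isRight) (h : toLex x < toLex y) :
    x.getRight hx < y.getRight hy := by
  cases x with
  | inl a => simp at hx
  | inr b => cases y with
    | inl a' => simp at hy
    | inr b' => simpa using Sum.Lex.inr_lt_inr_iff.1 h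

/-- If `(S_k)_{k∈ω}` is a sequence of chains with `S_k` embedding into `S_{k+1}` for every
`k`, then the lexicographic sum `S = Σ_{k∈ω} S_k` is additively indecomposable: whenever
`S` embeds into a lexicographic sum `A + B` of chains, `S` embeds into `A` or into `B`. -/
theorem statement15 {S : ℕ → Type*} [∀ k, LinearOrder (S k)]
    (hchain : ∀ k : ℕ, Nonempty (S k ↪o S (k + 1)))
    {A B : Type*} [LinearOrder A] [LinearOrder B]
    (h : Nonempty ((Σₗ k : ℕ, S k) ↪o (A ⊕ₗ B))) :
    Nonempty ((Σₗ k : ℕ, S k) ↪o A) ∨ Nonempty ((Σₗ k : ℕ, S k) ↪o B) := by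
  obtain ⟨f⟩ := h
  by_cases hA : ∀ s : (Σₗ k : ℕ, S k), (ofLex (f s)).isLeft
  · left
    exact ⟨OrderEmbedding.ofStrictMono (fun s => (ofLex (f s)).getLeft (hA s))
      fun s t hst => getLeft_lt_aux (hA s) (hA t) (f.strictMono hst)⟩
  · right
    push_neg at hA
    obtain ⟨s₀, hs₀⟩ := hA
    obtain ⟨b₀, hb₀⟩ := Sum.isRight_iff.1 (Sum.not_isLeft.1 hs₀)
    have eChain : ∀ k m : ℕ, k ≤ m → Nonempty (S k ↪o S m) := by
      intro k m hkm
      induction m, hkm using Nat.le_induction with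
      | base => exact ⟨(OrderIso.refl _).toOrderEmbedding⟩
      | succ m hm ih => exact ⟨ih.some.trans (hchain m).some⟩
    set k₀ := (ofLex s₀).1 with hk₀
    let e : ∀ k, S k ↪o S (k₀ + 1 + k) := fun k => (eChain k _ (by omega)).some
    let F : (Σₗ k : ℕ, S k) → (Σₗ k : ℕ, S k) :=
      fun s => toLex ⟨k₀ + 1 + (ofLex s).1, e _ ((ofLex s).2)⟩
    have hF : StrictMono F := by
      rintro ⟨k, x⟩ ⟨l, y⟩ hst
      rcases Sigma.Lex.lt_def.1 hst with hkl | ⟨hkl, h2⟩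
      · have hkl' : k < l := hkl
        exact Sigma.Lex.lt_def.2 (Or.inl (show k₀ + 1 + k < k₀ + 1 + l by omega))
      · dsimp at hkl
        subst hkl
        exact Sigma.Lex.lt_def.2 (Or.inr ⟨rfl, (e k).strictMono h2⟩)
    have hR : ∀ s, (ofLex (f (F s))).isRight := by
      intro s
      have h1 : s₀ < F s := Sigma.Lex.lt_def.2 (Or.inl (show k₀ < k₀ + 1 + (ofLex s).1 by omega))
      have h2 : toLex (Sum.inr b₀ : A ⊕ B) < f (F s) := by
        have := f.strictMono h1
        rwa [show f s₀ = toLex (Sum.inr b₀) from by rw [← hb₀]; rfl] at this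
      rcases hx : ofLex (f (F s)) with a | b
      · exfalso
        rw [show f (F s) = toLex (Sum.inl a) from by rw [← hx]; rfl] at h2
        exact Sum.Lex.not_inr_lt_inl h2
      · simp
    exact ⟨OrderEmbedding.ofStrictMono (fun s => (ofLex (f (F s))).getRight (hR s))
      fun s t hst => getRight_lt_aux (hR s) (hR t) (f.strictMono (hF hst))⟩
end
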